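/- arXiv:1303.4176 — 7 statements merged into one kernel-verified Lean document; each statement's English description precedes it below -/
import Mathlib

section
/- Let n ≥ 2 be an integer, set m := ⌈(n−1)/2⌉, and let d > 1, λ ∈ ℝ and t > 0. If p : (0,∞) → [0,∞) is measurable and satisfies p(η) ≤ d · g_n(η,t) for all η > 0, then ∫₀^∞ e^{λη} p(η) dη ≤ 2 d t^{1−n/2} e^{λ(λ+n−1)t} · Σ_{j=0}^{m} binom(m,j) (1+n t)^{m−j} (2t)^j · ∫_{−∞}^{∞} |α|^j e^{−t(α−λ)²} dα. (Equivalently, the last integral equals √(π/t) times the j-th absolute moment of a normal random variable with mean λ and variance 1/(2t).) -/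
open MeasureTheory Real

private lemma factorial_bound {y : ℝ} (hy : 0 ≤ y) (j : ℕ) : y ^ j / (j.factorial : ℝ) ≤ Real.exp y := by
  have h := Real.sum_le_exp_of_nonneg hy (j + 1)
  refine le_trans ?_ h
  exact Finset.single_le_sum (f := fun i => y ^ i / (i.factorial : ℝ))
    (fun i _ => by positivity) (Finset.self_mem_range_succ j)

private lemma integrable_abs_pow_gauss {b : ℝ} (hb : 0 < b) (j : ℕ) :
    Integrable (fun x : ℝ => |x| ^ j * Real.exp (-b * x ^ 2)) := by
  have hmeas : AEStronglyMeasurable (fun x : ℝ => |x| ^ j * Real.exp (-b * x ^ 2)) volume :=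
    (by fun_prop : Continuous fun x : ℝ => |x| ^ j * Real.exp (-b * x ^ 2)).aestronglyMeasurable
  refine Integrable.mono' (g := fun x : ℝ =>
      ((j.factorial : ℝ) : ℝ) * (2 / b) ^ j * Real.exp (-(b / 2) * x ^ 2) + Real.exp (-b * x ^ 2))
    (((integrable_exp_neg_mul_sq (by positivity : (0:ℝ) < b / 2)).const_mul _).add
      (integrable_exp_neg_mul_sq hb)) hmeas ?_
  filter_upwards with x
  have h1 : 0 ≤ |x| ^ j * Real.exp (-b * x ^ 2) := by positivity
  rw [Real.norm_of_nonneg h1]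
  rcases le_total (|x|) 1 with hx | hx
  · have : |x| ^ j ≤ 1 := pow_le_one₀ (abs_nonneg x) hx
    nlinarith [Real.exp_pos (-(b/2) * x ^ 2), Real.exp_pos (-b * x ^ 2),
      mul_pos (mul_pos (by positivity : (0:ℝ) < ((j.factorial : ℝ) : ℝ)) (by positivity : (0:ℝ) < (2/b) ^ j))
        (Real.exp_pos (-(b/2) * x ^ 2))]
  · have h2 : |x| ^ j ≤ (x ^ 2) ^ j := by
      calc |x| ^ j ≤ (|x| ^ 2) ^ j := by
            apply pow_le_pow_left₀ (abs_nonneg x) ?_ j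
            nlinarith
        _ = (x ^ 2) ^ j := by rw [sq_abs]
    have h3 : ((b / 2) * x ^ 2) ^ j / (j.factorial : ℝ) ≤ Real.exp ((b / 2) * x ^ 2) :=
      factorial_bound (by positivity) j
    have h4 : (x ^ 2) ^ j ≤ ((j.factorial : ℝ) : ℝ) * (2 / b) ^ j * Real.exp ((b / 2) * x ^ 2) := by
      have hbj : (0:ℝ) < (b / 2) ^ j := by positivity
      have := (div_le_iff₀ (by positivity : (0:ℝ) < ((j.factorial : ℝ) : ℝ))).1 h3
      rw [mul_pow] at this
      calc (x ^ 2) ^ j = ((b/2) ^ j * (x ^ 2) ^ j) * (2 / b) ^ j := by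
            rw [div_pow, div_pow]
            field_simp
        _ ≤ (Real.exp ((b / 2) * x ^ 2) * ((j.factorial : ℝ) : ℝ)) * (2 / b) ^ j := by
            apply mul_le_mul_of_nonneg_right this (by positivity)
        _ = ((j.factorial : ℝ) : ℝ) * (2 / b) ^ j * Real.exp ((b / 2) * x ^ 2) := by ring
    have h5 : Real.exp ((b / 2) * x ^ 2) * Real.exp (-b * x ^ 2) = Real.exp (-(b/2) * x ^ 2) := by
      rw [← Real.exp_add]; ring_nf
    have h6 : |x| ^ j * Real.exp (-b * x ^ 2) ≤
        ((j.factorial : ℝ) : ℝ) * (2 / b) ^ j * Real.exp (-(b/2) * x ^ 2) := by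
      calc |x| ^ j * Real.exp (-b * x ^ 2)
          ≤ ((j.factorial : ℝ) * (2 / b) ^ j * Real.exp ((b / 2) * x ^ 2)) * Real.exp (-b * x ^ 2) :=
            mul_le_mul_of_nonneg_right (h2.trans h4) (Real.exp_pos _).le
        _ = ((j.factorial : ℝ) : ℝ) * (2 / b) ^ j * Real.exp (-(b/2) * x ^ 2) := by rw [mul_assoc, h5]
    nlinarith [Real.exp_pos (-b * x ^ 2)]

private lemma integrable_abs_pow_gauss_shift {b : ℝ} (hb : 0 < b) (μ : ℝ) (j : ℕ) :
    Integrable (fun x : ℝ => |x| ^ j * Real.exp (-b * (x - μ) ^ 2)) := by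
  have h0 : Integrable (fun x : ℝ => |x + μ| ^ j * Real.exp (-b * x ^ 2)) := by
    have hBig : Integrable (fun x : ℝ => (|x| + |μ|) ^ j * Real.exp (-b * x ^ 2)) := by
      have heq : (fun x : ℝ => (|x| + |μ|) ^ j * Real.exp (-b * x ^ 2)) =
          fun x : ℝ => ∑ i ∈ Finset.range (j + 1),
            (|μ| ^ (j - i) * (Nat.choose j i : ℝ)) * (|x| ^ i * Real.exp (-b * x ^ 2)) := by
        funext x
        rw [add_pow, Finset.sum_mul]
        refine Finset.sum_congr rfl fun i _ => by ring
      rw [heq]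
      exact integrable_finset_sum _ fun i _ => (integrable_abs_pow_gauss hb i).const_mul _
    refine Integrable.mono' hBig
      (by fun_prop : Continuous fun x : ℝ => |x + μ| ^ j * Real.exp (-b * x ^ 2)).aestronglyMeasurable ?_
    filter_upwards with x
    have h1 : (0:ℝ) ≤ |x + μ| ^ j * Real.exp (-b * x ^ 2) := by positivity
    rw [Real.norm_of_nonneg h1]
    exact mul_le_mul_of_nonneg_right
      (pow_le_pow_left₀ (abs_nonneg _) (abs_add_le x μ) j) (Real.exp_pos _).le
  have h1 := h0.comp_sub_right μ
  simpa using h1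

/-- The Davies–Mandouvalos comparison function `g_n(η,t)` for the radial density of
hyperbolic Brownian motion on the `n`-dimensional Poincaré half-space. -/
noncomputable def hypg (n : ℕ) (η t : ℝ) : ℝ :=
  t ^ (-(n : ℝ) / 2) * (η / (1 + η)) ^ (n - 1) *
    Real.exp (-(η - ((n : ℝ) - 1) * t) ^ 2 / (4 * t)) *
    (1 + η + t) ^ (((n : ℝ) - 3) / 2) * (1 + η)

/-- Bound for the moment generating function of the radial component of a hyperbolic
Brownian motion (Lemma 1 in the paper). Here `m = ⌈(n-1)/2⌉` and the integral
`∫ |α|^j exp(-t (α-λ)²) dα` equals `√(2π/(2t))` times the `j`-th absolute moment of a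
normal random variable with mean `λ` and variance `1/(2t)`. -/
theorem mgf_bound (n : ℕ) (hn : 2 ≤ n) (d lam t : ℝ) (hd : 1 < d) (ht : 0 < t)
    (p : ℝ → ℝ) (hp : Measurable p) (hp_nonneg : ∀ η : ℝ, 0 < η → 0 ≤ p η)
    (hp_le : ∀ η : ℝ, 0 < η → p η ≤ d * hypg n η t) :
    ∫ η in Set.Ioi (0 : ℝ), Real.exp (lam * η) * p η ≤
      2 * d * t ^ (1 - (n : ℝ) / 2) * Real.exp (lam * (lam + (n : ℝ) - 1) * t) *
        ∑ j ∈ Finset.range (⌈((n : ℚ) - 1) / 2⌉₊ + 1),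
          (Nat.choose ⌈((n : ℚ) - 1) / 2⌉₊ j : ℝ) *
            (1 + (n : ℝ) * t) ^ (⌈((n : ℚ) - 1) / 2⌉₊ - j) * (2 * t) ^ j *
            ∫ α : ℝ, |α| ^ j * Real.exp (-t * (α - lam) ^ 2) := by
  set m : ℕ := ⌈((n : ℚ) - 1) / 2⌉₊ with hm
  set c : ℝ := ((n : ℝ) - 1) * t + 2 * lam * t with hc
  set E : ℝ := Real.exp (lam * (lam + (n : ℝ) - 1) * t) with hE
  set K : ℝ := d * t ^ (-(n : ℝ) / 2) * E with hK
  set F : ℝ → ℝ := fun η => (1 + |η| + t) ^ m * Real.exp (-(η - c) ^ 2 / (4 * t)) with hF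
  set g : ℝ → ℝ := fun α => (1 + (n : ℝ) * t + 2 * t * |α|) ^ m *
    Real.exp (-t * (α - lam) ^ 2) with hg
  have ht' : t ≠ 0 := ht.ne'
  have hd0 : (0:ℝ) ≤ d := by linarith
  have hK0 : 0 ≤ K := by
    have : (0:ℝ) ≤ t ^ (-(n : ℝ) / 2) := Real.rpow_nonneg ht.le _
    have := Real.exp_pos (lam * (lam + (n : ℝ) - 1) * t)
    positivity
  have hm_ge : ((n : ℝ) - 1) / 2 ≤ (m : ℝ) := by
    have h := Nat.le_ceil (((n : ℚ) - 1) / 2)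
    have : (((n : ℚ) - 1) / 2 : ℚ) ≤ (m : ℚ) := h
    have h2 := (Rat.cast_le (K := ℝ)).2 this
    push_cast at h2
    convert h2 using 2
  -- integrability of g and value of its integral
  have hg_eq : g = fun α => ∑ j ∈ Finset.range (m + 1),
      ((2 * t) ^ j * (1 + (n : ℝ) * t) ^ (m - j) * (Nat.choose m j : ℝ)) *
        (|α| ^ j * Real.exp (-t * (α - lam) ^ 2)) := by
    funext α
    simp only [hg]
    rw [show (1 + (n : ℝ) * t + 2 * t * |α|) = 2 * t * |α| + (1 + (n : ℝ) * t) from by ring,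
      add_pow, Finset.sum_mul]
    refine Finset.sum_congr rfl fun j _ => ?_
    rw [mul_pow]
    ring
  have hg_int : Integrable g := by
    rw [hg_eq]
    exact integrable_finset_sum _ fun j _ =>
      (integrable_abs_pow_gauss_shift ht lam j).const_mul _
  have hg_val : ∫ α, g α = ∑ j ∈ Finset.range (m + 1),
      ((2 * t) ^ j * (1 + (n : ℝ) * t) ^ (m - j) * (Nat.choose m j : ℝ)) *
        ∫ α : ℝ, |α| ^ j * Real.exp (-t * (α - lam) ^ 2) := by
    rw [hg_eq, integral_finset_sum _ (fun j _ =>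
      (integrable_abs_pow_gauss_shift ht lam j).const_mul _)]
    exact Finset.sum_congr rfl fun j _ => integral_const_mul _ _
  -- integrability of F
  have hb4 : (0:ℝ) < 1 / (4 * t) := by positivity
  have hF_int : Integrable F := by
    have hFeq : F = fun η => ∑ j ∈ Finset.range (m + 1),
        ((1 + t) ^ (m - j) * (Nat.choose m j : ℝ)) *
          (|η| ^ j * Real.exp (-(1 / (4 * t)) * (η - c) ^ 2)) := by
      funext η
      simp only [hF]
      rw [show (1 + |η| + t) = |η| + (1 + t) from by ring, add_pow, Finset.sum_mul,
        show -(η - c) ^ 2 / (4 * t) = -(1 / (4 * t)) * (η - c) ^ 2 from by ring]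
      exact Finset.sum_congr rfl fun j _ => by ring
    rw [hFeq]
    exact integrable_finset_sum _ fun j _ =>
      (integrable_abs_pow_gauss_shift hb4 c j).const_mul _
  have hF_nonneg : ∀ η, 0 ≤ F η := fun η => by
    simp only [hF]
    have : (0:ℝ) ≤ 1 + |η| + t := by positivity
    positivity
  -- pointwise bound on Ioi 0
  have hpt : ∀ η : ℝ, 0 < η → Real.exp (lam * η) * p η ≤ K * F η := by
    intro η hη
    have h1η : (0:ℝ) < 1 + η := by linarith
    have h1ηt : (1:ℝ) ≤ 1 + η + t := by linarith
    have h1ηt0 : (0:ℝ) < 1 + η + t := by linarith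
    have hB : (η / (1 + η)) ^ (n - 1) ≤ 1 :=
      pow_le_one₀ (by positivity) ((div_le_one h1η).2 (by linarith))
    have hDE : (1 + η + t) ^ (((n : ℝ) - 3) / 2) * (1 + η) ≤ (1 + η + t) ^ m := by
      calc (1 + η + t) ^ (((n : ℝ) - 3) / 2) * (1 + η)
          ≤ (1 + η + t) ^ (((n : ℝ) - 3) / 2) * (1 + η + t) := by
            exact mul_le_mul_of_nonneg_left (by linarith) (Real.rpow_nonneg h1ηt0.le _)
        _ = (1 + η + t) ^ (((n : ℝ) - 3) / 2 + 1) := by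
            rw [Real.rpow_add_one h1ηt0.ne']
        _ ≤ (1 + η + t) ^ ((m : ℝ)) := by
            apply Real.rpow_le_rpow_of_exponent_le h1ηt
            linarith
        _ = (1 + η + t) ^ m := Real.rpow_natCast _ m
    have h2 : hypg n η t ≤ t ^ (-(n : ℝ) / 2) *
        Real.exp (-(η - ((n : ℝ) - 1) * t) ^ 2 / (4 * t)) * (1 + η + t) ^ m := by
      unfold hypg
      have hA : (0:ℝ) ≤ t ^ (-(n : ℝ) / 2) := Real.rpow_nonneg ht.le _
      have hC : (0:ℝ) < Real.exp (-(η - ((n : ℝ) - 1) * t) ^ 2 / (4 * t)) := Real.exp_pos _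
      calc t ^ (-(n : ℝ) / 2) * (η / (1 + η)) ^ (n - 1) *
            Real.exp (-(η - ((n : ℝ) - 1) * t) ^ 2 / (4 * t)) *
            (1 + η + t) ^ (((n : ℝ) - 3) / 2) * (1 + η)
          = (t ^ (-(n : ℝ) / 2) * Real.exp (-(η - ((n : ℝ) - 1) * t) ^ 2 / (4 * t))) *
            ((η / (1 + η)) ^ (n - 1) *
              ((1 + η + t) ^ (((n : ℝ) - 3) / 2) * (1 + η))) := by ring
        _ ≤ (t ^ (-(n : ℝ) / 2) * Real.exp (-(η - ((n : ℝ) - 1) * t) ^ 2 / (4 * t))) *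
            (1 * ((1 + η + t) ^ m)) := by
            refine mul_le_mul_of_nonneg_left ?_ (by positivity)
            refine mul_le_mul hB hDE ?_ zero_le_one
            have : (0:ℝ) ≤ (1 + η + t) ^ (((n : ℝ) - 3) / 2) := Real.rpow_nonneg h1ηt0.le _
            positivity
        _ = t ^ (-(n : ℝ) / 2) *
            Real.exp (-(η - ((n : ℝ) - 1) * t) ^ 2 / (4 * t)) * (1 + η + t) ^ m := by ring
    have hexp : Real.exp (lam * η) * Real.exp (-(η - ((n : ℝ) - 1) * t) ^ 2 / (4 * t)) =
        E * Real.exp (-(η - c) ^ 2 / (4 * t)) := by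
      rw [hE, ← Real.exp_add, ← Real.exp_add]
      congr 1
      rw [hc]
      field_simp
      ring
    calc Real.exp (lam * η) * p η
        ≤ Real.exp (lam * η) * (d * hypg n η t) :=
          mul_le_mul_of_nonneg_left (hp_le η hη) (Real.exp_pos _).le
      _ ≤ Real.exp (lam * η) * (d * (t ^ (-(n : ℝ) / 2) *
            Real.exp (-(η - ((n : ℝ) - 1) * t) ^ 2 / (4 * t)) * (1 + η + t) ^ m)) := by
          exact mul_le_mul_of_nonneg_left (mul_le_mul_of_nonneg_left h2 hd0) (Real.exp_pos _).le
      _ = K * F η := by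
          rw [hK]
          simp only [hF]
          rw [abs_of_pos hη]
          linear_combination (d * t ^ (-(n : ℝ) / 2) * (1 + η + t) ^ m) * hexp
  -- step B: integral over Ioi 0
  have hstepB : ∫ η in Set.Ioi (0:ℝ), Real.exp (lam * η) * p η ≤
      ∫ η in Set.Ioi (0:ℝ), K * F η := by
    refine integral_mono_of_nonneg ?_ ((hF_int.const_mul K).restrict) ?_
    · refine (ae_restrict_iff' measurableSet_Ioi).2 (Filter.Eventually.of_forall ?_)
      intro η hη
      exact mul_nonneg (Real.exp_pos _).le (hp_nonneg η hη)
    · refine (ae_restrict_iff' measurableSet_Ioi).2 (Filter.Eventually.of_forall ?_)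
      intro η hη
      exact hpt η hη
  have hstepC : ∫ η in Set.Ioi (0:ℝ), K * F η ≤ K * ∫ η, F η := by
    rw [integral_const_mul]
    exact mul_le_mul_of_nonneg_left
      (setIntegral_le_integral hF_int (Filter.Eventually.of_forall hF_nonneg)) hK0
  -- substitution
  have hsub : ∫ η, F η = (2 * t) * ∫ α, F (2 * t * α + ((n : ℝ) - 1) * t) := by
    have h1 : ∫ α, (fun x => F (x + ((n : ℝ) - 1) * t)) (2 * t * α) =
        |(2 * t)⁻¹| • ∫ y, F (y + ((n : ℝ) - 1) * t) :=
      Measure.integral_comp_mul_left (fun x => F (x + ((n : ℝ) - 1) * t)) (2 * t)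
    simp only at h1
    rw [integral_add_right_eq_self F (((n : ℝ) - 1) * t)] at h1
    rw [h1, abs_of_pos (by positivity : (0:ℝ) < (2 * t)⁻¹), smul_eq_mul]
    field_simp
  have hle : ∀ α : ℝ, F (2 * t * α + ((n : ℝ) - 1) * t) ≤ g α := by
    intro α
    simp only [hF, hg]
    have hexp2 : -(2 * t * α + ((n : ℝ) - 1) * t - c) ^ 2 / (4 * t) = -t * (α - lam) ^ 2 := by
      rw [hc]; field_simp; ring
    rw [hexp2]
    refine mul_le_mul_of_nonneg_right ?_ (Real.exp_pos _).le
    refine pow_le_pow_left₀ (by positivity) ?_ m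
    have habs : |2 * t * α + ((n : ℝ) - 1) * t| ≤ 2 * t * |α| + ((n : ℝ) - 1) * t := by
      refine (abs_add_le _ _).trans ?_
      have h1 : |2 * t * α| = 2 * t * |α| := by
        rw [abs_mul, abs_of_pos (by positivity : (0:ℝ) < 2 * t)]
      have h2 : |((n : ℝ) - 1) * t| = ((n : ℝ) - 1) * t := by
        refine abs_of_nonneg ?_
        have : (2:ℝ) ≤ (n:ℝ) := by exact_mod_cast hn
        nlinarith
      rw [h1, h2]
    have hn2 : (2:ℝ) ≤ (n:ℝ) := by exact_mod_cast hn
    calc 1 + |2 * t * α + ((n : ℝ) - 1) * t| + t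
        ≤ 1 + (2 * t * |α| + ((n : ℝ) - 1) * t) + t := by linarith
      _ = 1 + (n : ℝ) * t + 2 * t * |α| := by ring
  have hcomp_int : Integrable (fun α => F (2 * t * α + ((n : ℝ) - 1) * t)) := by
    refine Integrable.mono' hg_int ?_ ?_
    · have hFc : Continuous F := by
        rw [hF]
        fun_prop
      exact (hFc.comp (by fun_prop)).aestronglyMeasurable
    · filter_upwards with α
      rw [Real.norm_of_nonneg (hF_nonneg _)]
      exact hle α
  have hstepD : ∫ η, F η ≤ (2 * t) * ∫ α, g α := by
    rw [hsub]
    exact mul_le_mul_of_nonneg_left (integral_mono hcomp_int hg_int hle) (by positivity)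
  -- assemble
  have hconst : K * ((2 * t) * ∫ α, g α) =
      2 * d * t ^ (1 - (n : ℝ) / 2) * E * ∫ α, g α := by
    have hpow : t ^ (-(n : ℝ) / 2) * t = t ^ (1 - (n : ℝ) / 2) := by
      rw [show (1 - (n : ℝ) / 2) = -(n : ℝ) / 2 + 1 from by ring,
        Real.rpow_add_one ht']
    rw [hK]
    rw [← hpow]
    ring
  calc ∫ η in Set.Ioi (0:ℝ), Real.exp (lam * η) * p η
      ≤ K * ∫ η, F η := hstepB.trans hstepC
    _ ≤ K * ((2 * t) * ∫ α, g α) := mul_le_mul_of_nonneg_left hstepD hK0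
    _ = 2 * d * t ^ (1 - (n : ℝ) / 2) * E * ∫ α, g α := hconst
    _ = 2 * d * t ^ (1 - (n : ℝ) / 2) * E *
        ∑ j ∈ Finset.range (m + 1),
          (Nat.choose m j : ℝ) * (1 + (n : ℝ) * t) ^ (m - j) * (2 * t) ^ j *
            ∫ α : ℝ, |α| ^ j * Real.exp (-t * (α - lam) ^ 2) := by
        rw [hg_val]
        congr 1
        exact Finset.sum_congr rfl fun j _ => by ring
end

section
/- Let n ≥ 2 be an integer and d > 1, and let p : (0,∞) × (0,∞) → [0,∞) be measurable with p(η,t) ≥ d^{−1} g_n(η,t) for all η, t > 0. Then for every x ≥ 0 and every open set G ⊆ ℝ with x ∈ G, liminf_{t→∞} (1/t) · log ( ∫_{{η > 0 : η/t ∈ G}} p(η,t) dη ) ≥ −(x−(n−1))²/4. -/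
set_option maxHeartbeats 1000000


open MeasureTheory Real Filter

private lemma sq_le_max {lo hi v : ℝ} (h1 : lo ≤ v) (h2 : v ≤ hi) :
    v ^ 2 ≤ max (lo ^ 2) (hi ^ 2) := by
  rcases le_total v 0 with h | h
  · exact le_max_of_le_left (by nlinarith)
  · exact le_max_of_le_right (by nlinarith)

private lemma core_bound (n : ℕ) (hn : 2 ≤ n) (d : ℝ) (hd : 1 < d)
    (p : ℝ → ℝ → ℝ) (hp : Measurable (Function.uncurry p))
    (hp_ge : ∀ η t : ℝ, 0 < η → 0 < t → d⁻¹ * hypg n η t ≤ p η t)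
    (G : Set ℝ) (A B : ℝ) (hA : 0 < A) (hAB : A < B) (hsub : Set.Icc A B ⊆ G) :
    ((-(max ((A - ((n:ℝ)-1))^2) ((B - ((n:ℝ)-1))^2) / 4) : ℝ) : EReal) ≤
      Filter.liminf
        (fun t : ℝ => ((t⁻¹ : ℝ) : EReal) *
          ENNReal.log (∫⁻ η in {η : ℝ | 0 < η ∧ η / t ∈ G}, ENNReal.ofReal (p η t)))
        Filter.atTop := by
  have hd0 : (0:ℝ) < d := lt_trans one_pos hd
  have hn2 : (2:ℝ) ≤ (n:ℝ) := by exact_mod_cast hn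
  set M : ℝ := max ((A - ((n:ℝ)-1))^2) ((B - ((n:ℝ)-1))^2) / 4 with hM
  set c1 : ℝ := (A/(1+A))^(n-1) with hc1
  have hc1pos : 0 < c1 := pow_pos (div_pos hA (by linarith)) _
  have h2B : (0:ℝ) < 2 + B := by linarith
  set C : ℝ := d⁻¹ * c1 * (2+B) ^ (-(n:ℝ)) * (B - A) with hC
  have hCpos : 0 < C :=
    mul_pos (mul_pos (mul_pos (inv_pos.2 hd0) hc1pos) (Real.rpow_pos_of_pos h2B _))
      (by linarith)
  set k : ℝ → ℝ := fun t => C * (t ^ (-(n:ℝ)) * Real.exp (-(M*t)) * t ^ (-(n:ℝ)) * t) with hk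
  -- pointwise bound on hypg
  have key : ∀ t : ℝ, 1 ≤ t → ∀ η ∈ Set.Icc (A*t) (B*t),
      t ^ (-(n:ℝ)) * c1 * Real.exp (-(M*t)) * ((2+B)*t) ^ (-(n:ℝ)) * 1 ≤ hypg n η t := by
    intro t ht η hη
    obtain ⟨hη1, hη2⟩ := hη
    have ht0 : (0:ℝ) < t := lt_of_lt_of_le one_pos ht
    have hAt : A ≤ A * t := by nlinarith
    have hηpos : (0:ℝ) < η := lt_of_lt_of_le (mul_pos hA ht0) hη1
    have hAη : A ≤ η := le_trans hAt hη1
    have f1 : t ^ (-(n:ℝ)) ≤ t ^ (-(n:ℝ)/2) :=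
      Real.rpow_le_rpow_of_exponent_le ht (by linarith)
    have f2 : c1 ≤ (η/(1+η))^(n-1) := by
      apply pow_le_pow_left₀ (by positivity)
      rw [div_le_div_iff₀ (by linarith) (by linarith)]
      nlinarith
    have f3 : Real.exp (-(M*t)) ≤ Real.exp (-(η - ((n:ℝ)-1)*t)^2 / (4*t)) := by
      apply Real.exp_le_exp.2
      have hv : (η - ((n:ℝ)-1)*t)^2 ≤ max (((A-((n:ℝ)-1))*t)^2) (((B-((n:ℝ)-1))*t)^2) :=
        sq_le_max (by nlinarith) (by nlinarith)
      have hmax : max (((A-((n:ℝ)-1))*t)^2) (((B-((n:ℝ)-1))*t)^2)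
          ≤ max ((A-((n:ℝ)-1))^2) ((B-((n:ℝ)-1))^2) * t^2 := by
        apply max_le
        · rw [mul_pow]
          exact mul_le_mul_of_nonneg_right (le_max_left _ _) (sq_nonneg t)
        · rw [mul_pow]
          exact mul_le_mul_of_nonneg_right (le_max_right _ _) (sq_nonneg t)
      have hv2 : (η - ((n:ℝ)-1)*t)^2 ≤ max ((A-((n:ℝ)-1))^2) ((B-((n:ℝ)-1))^2) * t^2 :=
        le_trans hv hmax
      rw [neg_div, neg_le_neg_iff, div_le_iff₀ (by positivity)]
      rw [hM]
      nlinarith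
    have f4 : ((2+B)*t) ^ (-(n:ℝ)) ≤ (1+η+t) ^ (((n:ℝ)-3)/2) := by
      have hb1 : (1:ℝ) ≤ 1+η+t := by linarith
      have hb2 : 1+η+t ≤ (2+B)*t := by nlinarith
      calc ((2+B)*t) ^ (-(n:ℝ)) ≤ (1+η+t) ^ (-(n:ℝ)) :=
            Real.rpow_le_rpow_of_nonpos (by linarith) hb2 (by linarith)
        _ ≤ (1+η+t) ^ (((n:ℝ)-3)/2) :=
            Real.rpow_le_rpow_of_exponent_le hb1 (by linarith)
    have f5 : (1:ℝ) ≤ 1 + η := by linarith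
    have n1 : (0:ℝ) ≤ t ^ (-(n:ℝ)/2) := Real.rpow_nonneg ht0.le _
    have n2 : (0:ℝ) ≤ (η/(1+η))^(n-1) := pow_nonneg (by positivity) _
    have n3 : (0:ℝ) ≤ Real.exp (-(η - ((n:ℝ)-1)*t)^2 / (4*t)) := (Real.exp_pos _).le
    have n4 : (0:ℝ) ≤ ((2+B)*t) ^ (-(n:ℝ)) := Real.rpow_nonneg (by positivity) _
    have m1 : (0:ℝ) ≤ c1 := hc1pos.le
    have m2 : (0:ℝ) ≤ Real.exp (-(M*t)) := (Real.exp_pos _).le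
    unfold hypg
    exact mul_le_mul
      (mul_le_mul
        (mul_le_mul (mul_le_mul f1 f2 m1 n1) f3 m2 (by positivity)) f4 n4 (by positivity))
      f5 zero_le_one (by positivity)
  -- integral bound
  have hint : ∀ t : ℝ, 1 ≤ t →
      ENNReal.ofReal (k t) ≤
        ∫⁻ η in {η : ℝ | 0 < η ∧ η / t ∈ G}, ENNReal.ofReal (p η t) := by
    intro t ht
    have ht0 : (0:ℝ) < t := lt_of_lt_of_le one_pos ht
    set Kt : ℝ := d⁻¹ * (t ^ (-(n:ℝ)) * c1 * Real.exp (-(M*t)) * ((2+B)*t) ^ (-(n:ℝ)) * 1)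
      with hKt
    have hKtnn : 0 ≤ Kt := by
      have := Real.rpow_nonneg ht0.le (-(n:ℝ))
      have := Real.rpow_nonneg (mul_nonneg h2B.le ht0.le) (-(n:ℝ))
      have : (0:ℝ) ≤ d⁻¹ := (inv_pos.2 hd0).le
      positivity
    have hkeq : k t = Kt * ((B-A)*t) := by
      rw [hKt, hk, hC, Real.mul_rpow h2B.le ht0.le]; ring
    have hsubset : Set.Icc (A*t) (B*t) ⊆ {η : ℝ | 0 < η ∧ η / t ∈ G} := by
      intro η hη
      obtain ⟨hη1, hη2⟩ := hη
      have hηpos : (0:ℝ) < η := lt_of_lt_of_le (mul_pos hA ht0) hη1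
      refine ⟨hηpos, hsub ⟨?_, ?_⟩⟩
      · rw [le_div_iff₀ ht0]; linarith
      · rw [div_le_iff₀ ht0]; linarith
    have hmeas : Measurable fun η : ℝ => ENNReal.ofReal (p η t) :=
      (hp.comp (measurable_id.prodMk measurable_const)).ennreal_ofReal
    calc ENNReal.ofReal (k t)
        = ENNReal.ofReal Kt * volume (Set.Icc (A*t) (B*t)) := by
          rw [hkeq, ENNReal.ofReal_mul hKtnn, Real.volume_Icc]
          congr 2
          ring
      _ = ∫⁻ _ in Set.Icc (A*t) (B*t), ENNReal.ofReal Kt := (setLIntegral_const _ _).symm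
      _ ≤ ∫⁻ η in Set.Icc (A*t) (B*t), ENNReal.ofReal (p η t) := by
          apply setLIntegral_mono hmeas
          intro η hη
          apply ENNReal.ofReal_le_ofReal
          have hηpos : (0:ℝ) < η := lt_of_lt_of_le (mul_pos hA ht0) hη.1
          calc Kt ≤ d⁻¹ * hypg n η t := by
                apply mul_le_mul_of_nonneg_left (key t ht η hη) (inv_pos.2 hd0).le
            _ ≤ p η t := hp_ge η t hηpos ht0
      _ ≤ ∫⁻ η in {η : ℝ | 0 < η ∧ η / t ∈ G}, ENNReal.ofReal (p η t) :=
          lintegral_mono_set hsubset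
  -- positivity of k, log formula
  have hkpos : ∀ t : ℝ, 1 ≤ t → 0 < k t := by
    intro t ht
    have ht0 : (0:ℝ) < t := lt_of_lt_of_le one_pos ht
    have h1 : (0:ℝ) < t ^ (-(n:ℝ)) := Real.rpow_pos_of_pos ht0 _
    positivity
  set ψ : ℝ → ℝ := fun t => Real.log C * t⁻¹ + ((1:ℝ) - 2*n) * (Real.log t / t) - M with hψ
  have hψeq : ∀ t : ℝ, 1 ≤ t → t⁻¹ * Real.log (k t) = ψ t := by
    intro t ht
    have ht0 : (0:ℝ) < t := lt_of_lt_of_le one_pos ht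
    have h1 : t ^ (-(n:ℝ)) ≠ 0 := (Real.rpow_pos_of_pos ht0 _).ne'
    have h2 : Real.exp (-(M*t)) ≠ 0 := (Real.exp_pos _).ne'
    have hlog : Real.log (k t) = Real.log C + ((1:ℝ) - 2*n) * Real.log t - M * t := by
      rw [hk]
      rw [Real.log_mul hCpos.ne' (by positivity),
        Real.log_mul (by positivity) ht0.ne',
        Real.log_mul (by positivity) h1,
        Real.log_mul h1 h2,
        Real.log_rpow ht0, Real.log_exp]
      ring
    rw [hlog, hψ]
    field_simp
  have hψlim : Tendsto ψ atTop (nhds (-M)) := by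
    have l1 : Tendsto (fun t : ℝ => Real.log C * t⁻¹) atTop (nhds 0) := by
      simpa using tendsto_inv_atTop_zero.const_mul (Real.log C)
    have l2 : Tendsto (fun t : ℝ => ((1:ℝ) - 2*n) * (Real.log t / t)) atTop (nhds 0) := by
      simpa using (Real.isLittleO_log_id_atTop.tendsto_div_nhds_zero).const_mul ((1:ℝ) - 2*n)
    have := (l1.add l2).sub (tendsto_const_nhds (x := M))
    simpa using this
  -- conclude via liminf
  have hlim : Tendsto (fun t : ℝ => ((ψ t : ℝ) : EReal)) atTop (nhds ((-M : ℝ) : EReal)) :=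
    EReal.tendsto_coe.2 hψlim
  calc ((-M : ℝ) : EReal)
      = Filter.liminf (fun t : ℝ => ((ψ t : ℝ) : EReal)) atTop := hlim.liminf_eq.symm
    _ ≤ _ := by
        apply liminf_le_liminf (hu := by isBoundedDefault) (hv := by isBoundedDefault)
        filter_upwards [eventually_ge_atTop (1:ℝ)] with t ht
        have ht0 : (0:ℝ) < t := lt_of_lt_of_le one_pos ht
        calc ((ψ t : ℝ) : EReal) = ((t⁻¹ * Real.log (k t) : ℝ) : EReal) := by
              rw [hψeq t ht]
          _ = ((t⁻¹ : ℝ) : EReal) * ((Real.log (k t) : ℝ) : EReal) := EReal.coe_mul _ _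
          _ ≤ ((t⁻¹ : ℝ) : EReal) *
              ENNReal.log (∫⁻ η in {η : ℝ | 0 < η ∧ η / t ∈ G}, ENNReal.ofReal (p η t)) := by
              apply mul_le_mul_of_nonneg_left _ (by exact_mod_cast (inv_pos.2 ht0).le)
              calc ((Real.log (k t) : ℝ) : EReal)
                  = ENNReal.log (ENNReal.ofReal (k t)) :=
                    (ENNReal.log_ofReal_of_pos (hkpos t ht)).symm
                _ ≤ _ := ENNReal.log_monotone (hint t ht)

/-- Large deviation lower bound for the radial component of hyperbolic Brownian motion:
for every `x ≥ 0` and every open `G ∋ x`,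
`liminf_{t→∞} (1/t) log P(D_n(t)/t ∈ G) ≥ -(x-(n-1))²/4`. -/
theorem ldp_lower_bound (n : ℕ) (hn : 2 ≤ n) (d : ℝ) (hd : 1 < d)
    (p : ℝ → ℝ → ℝ) (hp : Measurable (Function.uncurry p))
    (hp_nonneg : ∀ η t : ℝ, 0 < η → 0 < t → 0 ≤ p η t)
    (hp_ge : ∀ η t : ℝ, 0 < η → 0 < t → d⁻¹ * hypg n η t ≤ p η t)
    (x : ℝ) (hx : 0 ≤ x) (G : Set ℝ) (hG : IsOpen G) (hxG : x ∈ G) :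
    ((-((x - ((n : ℝ) - 1)) ^ 2 / 4) : ℝ) : EReal) ≤
      Filter.liminf
        (fun t : ℝ => ((t⁻¹ : ℝ) : EReal) *
          ENNReal.log (∫⁻ η in {η : ℝ | 0 < η ∧ η / t ∈ G}, ENNReal.ofReal (p η t)))
        Filter.atTop := by
  obtain ⟨I, hI⟩ : ∃ I : ℝ, I = (x - ((n : ℝ) - 1)) ^ 2 / 4 := ⟨_, rfl⟩
  obtain ⟨L, hL⟩ : ∃ L : EReal, L = Filter.liminf
      (fun t : ℝ => ((t⁻¹ : ℝ) : EReal) *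
        ENNReal.log (∫⁻ η in {η : ℝ | 0 < η ∧ η / t ∈ G}, ENNReal.ofReal (p η t)))
      Filter.atTop := ⟨_, rfl⟩
  rw [← hI, ← hL]
  have key : ∀ ε : ℝ, 0 < ε → ((-(I+ε) : ℝ) : EReal) ≤ L := by
    intro ε hε
    obtain ⟨δG, hδG, hball⟩ := Metric.isOpen_iff.1 hG x hxG
    have hqc : Continuous fun u : ℝ => (u - ((n : ℝ) - 1)) ^ 2 / 4 := by continuity
    obtain ⟨δq, hδq, hq⟩ := Metric.continuousAt_iff.1 hqc.continuousAt ε hε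
    obtain ⟨δ, hδ⟩ : ∃ δ : ℝ, δ = min δG δq := ⟨_, rfl⟩
    have hδpos : 0 < δ := hδ ▸ lt_min hδG hδq
    have hδ1 : δ ≤ δG := hδ ▸ min_le_left _ _
    have hδ2 : δ ≤ δq := hδ ▸ min_le_right _ _
    obtain ⟨A, hA⟩ : ∃ A : ℝ, A = x + δ/3 := ⟨_, rfl⟩
    obtain ⟨B, hB⟩ : ∃ B : ℝ, B = x + δ/2 := ⟨_, rfl⟩
    have hApos : 0 < A := by rw [hA]; linarith
    have hAB : A < B := by rw [hA, hB]; linarith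
    have hsub : Set.Icc A B ⊆ G := by
      intro y hy
      apply hball
      rw [Metric.mem_ball, Real.dist_eq, abs_lt]
      obtain ⟨h1, h2⟩ := hy
      rw [hA] at h1; rw [hB] at h2
      constructor <;> linarith
    have hdA : dist A x < δq := by
      rw [Real.dist_eq, hA]
      rw [show x + δ/3 - x = δ/3 by ring, abs_of_nonneg (by linarith)]
      linarith
    have hdB : dist B x < δq := by
      rw [Real.dist_eq, hB]
      rw [show x + δ/2 - x = δ/2 by ring, abs_of_nonneg (by linarith)]
      linarith
    have hqA : (A - ((n : ℝ) - 1)) ^ 2 / 4 < I + ε := by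
      have h := hq hdA
      rw [Real.dist_eq, abs_lt] at h
      have h2 := h.2
      rw [hI]; linarith
    have hqB : (B - ((n : ℝ) - 1)) ^ 2 / 4 < I + ε := by
      have h := hq hdB
      rw [Real.dist_eq, abs_lt] at h
      have h2 := h.2
      rw [hI]; linarith
    have hMle : max ((A - ((n:ℝ)-1))^2) ((B - ((n:ℝ)-1))^2) / 4 ≤ I + ε := by
      rw [div_le_iff₀ (by norm_num : (0:ℝ) < 4)]
      apply max_le <;> linarith
    calc ((-(I+ε) : ℝ) : EReal)
        ≤ ((-(max ((A - ((n:ℝ)-1))^2) ((B - ((n:ℝ)-1))^2) / 4) : ℝ) : EReal) := by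
          exact_mod_cast neg_le_neg hMle
      _ ≤ L := hL ▸ core_bound n hn d hd p hp hp_ge G A B hApos hAB hsub
  have htd : Tendsto (fun ε : ℝ => ((-(I+ε) : ℝ) : EReal)) (nhdsWithin 0 (Set.Ioi 0))
      (nhds ((-I : ℝ) : EReal)) := by
    apply EReal.tendsto_coe.2
    have h := ((continuous_const.add continuous_id).neg).tendsto (0:ℝ)
      (f := fun ε : ℝ => -(I+ε))
    simpa using h.mono_left nhdsWithin_le_nhds
  exact le_of_tendsto htd (eventually_nhdsWithin_of_forall (fun ε hε => key ε hε))
end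

section
/- Let n ≥ 2 be an integer and d > 1, and let p : (0,∞) × (0,∞) → [0,∞) be measurable with p(η,t) ≤ d g_n(η,t) for all η, t > 0. Then for every x̂ with 0 < x̂ < n−1, limsup_{t→∞} (1/t) · log ( ∫_0^{t x̂} p(η,t) dη ) ≤ −(x̂−(n−1))²/4. -/
open MeasureTheory Real Filter

set_option maxHeartbeats 1000000 in
/-- Lower-tail large deviation upper bound for the radial component of hyperbolic
Brownian motion: for every `0 < x̂ < n-1`,
`limsup_{t→∞} (1/t) log P(D_n(t)/t ≤ x̂) ≤ -(x̂-(n-1))²/4`. -/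
theorem ldp_upper_bound_lower_tail (n : ℕ) (hn : 2 ≤ n) (d : ℝ) (hd : 1 < d)
    (p : ℝ → ℝ → ℝ) (hp : Measurable (Function.uncurry p))
    (hp_nonneg : ∀ η t : ℝ, 0 < η → 0 < t → 0 ≤ p η t)
    (hp_le : ∀ η t : ℝ, 0 < η → 0 < t → p η t ≤ d * hypg n η t)
    (xhat : ℝ) (hx0 : 0 < xhat) (hxn : xhat < (n : ℝ) - 1) :
    Filter.limsup
        (fun t : ℝ => ((t⁻¹ : ℝ) : EReal) *
          ENNReal.log (∫⁻ η in {η : ℝ | 0 < η ∧ η ≤ t * xhat}, ENNReal.ofReal (p η t)))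
        Filter.atTop ≤
      ((-((xhat - ((n : ℝ) - 1)) ^ 2 / 4) : ℝ) : EReal) := by
  set c : ℝ := (xhat - ((n : ℝ) - 1)) ^ 2 / 4 with hc
  have hc_pos : 0 < c := by
    have : xhat - ((n : ℝ) - 1) ≠ 0 := by linarith
    positivity
  have h2x : (0:ℝ) < 2 + xhat := by linarith
  have hd0 : (0:ℝ) < d := lt_trans one_pos hd
  set K : ℝ := Real.log d + ((n : ℝ) + 2) * Real.log (2 + xhat) + Real.log xhat with hK
  set g₀ : ℝ → ℝ := fun t => K * t⁻¹ + ((n : ℝ) + 3) * (Real.log t / t) - c with hg₀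
  have hg₀_tendsto : Tendsto g₀ atTop (nhds (-c)) := by
    have h1 : Tendsto (fun t : ℝ => K * t⁻¹) atTop (nhds (K * 0)) :=
      tendsto_inv_atTop_zero.const_mul K
    have h2 : Tendsto (fun t : ℝ => ((n : ℝ) + 3) * (Real.log t / t)) atTop
        (nhds (((n : ℝ) + 3) * 0)) :=
      (Real.isLittleO_log_id_atTop.tendsto_div_nhds_zero).const_mul _
    have := (h1.add h2).sub_const c
    simpa using this
  have hg_tendsto : Tendsto (fun t : ℝ => ((g₀ t : ℝ) : EReal)) atTop (nhds ((-c : ℝ) : EReal)) :=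
    EReal.tendsto_coe.2 hg₀_tendsto
  have hbound : ∀ᶠ t in atTop,
      ((t⁻¹ : ℝ) : EReal) *
        ENNReal.log (∫⁻ η in {η : ℝ | 0 < η ∧ η ≤ t * xhat}, ENNReal.ofReal (p η t)) ≤
      ((g₀ t : ℝ) : EReal) := by
    filter_upwards [eventually_ge_atTop (1 : ℝ)] with t ht1
    have ht0 : (0:ℝ) < t := lt_of_lt_of_le one_pos ht1
    set B : ℝ := d * Real.exp (-c * t) * ((2 + xhat) * t) ^ (n + 2) * (t * xhat) with hB
    have hB_pos : 0 < B := by positivity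
    have hset : {η : ℝ | 0 < η ∧ η ≤ t * xhat} = Set.Ioc 0 (t * xhat) := by
      ext η; simp [Set.mem_Ioc]
    -- pointwise bound on the integrand
    have key : ∀ η ∈ Set.Ioc (0:ℝ) (t * xhat),
        p η t ≤ d * Real.exp (-c * t) * ((2 + xhat) * t) ^ (n + 2) := by
      rintro η ⟨hη0, hηle⟩
      have hη1 : (0:ℝ) < 1 + η := by linarith
      have hbase1 : (1:ℝ) ≤ 1 + η + t := by linarith
      have hbase_le : 1 + η + t ≤ (2 + xhat) * t := by nlinarith
      have h1 : t ^ (-(n : ℝ) / 2) ≤ 1 := by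
        apply Real.rpow_le_one_of_one_le_of_nonpos ht1
        have hn0 : (0:ℝ) ≤ (n:ℝ) := Nat.cast_nonneg n
        linarith
      have h2 : (η / (1 + η)) ^ (n - 1) ≤ 1 := by
        apply pow_le_one₀ (by positivity)
        rw [div_le_one hη1]; linarith
      have h3 : Real.exp (-(η - ((n : ℝ) - 1) * t) ^ 2 / (4 * t)) ≤ Real.exp (-c * t) := by
        apply Real.exp_le_exp.2
        rw [div_le_iff₀ (by positivity)]
        have hX : η - ((n:ℝ) - 1) * t ≤ (xhat - ((n:ℝ) - 1)) * t := by nlinarith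
        have hY : (xhat - ((n:ℝ) - 1)) * t ≤ 0 := by nlinarith
        nlinarith [mul_nonneg (sub_nonneg.2 hX)
          (by linarith : (0:ℝ) ≤ -(η - ((n:ℝ) - 1) * t) - (xhat - ((n:ℝ) - 1)) * t)]
      have h4 : (1 + η + t) ^ (((n : ℝ) - 3) / 2) ≤ ((2 + xhat) * t) ^ (n + 1) := by
        calc (1 + η + t) ^ (((n : ℝ) - 3) / 2)
            ≤ (1 + η + t) ^ (((n : ℕ) + 1 : ℕ) : ℝ) := by
              apply Real.rpow_le_rpow_of_exponent_le hbase1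
              have hn0 : (0:ℝ) ≤ (n:ℝ) := Nat.cast_nonneg n
              push_cast; linarith
          _ = (1 + η + t) ^ (n + 1) := Real.rpow_natCast _ _
          _ ≤ ((2 + xhat) * t) ^ (n + 1) := by
              apply pow_le_pow_left₀ (by linarith) hbase_le
      have h5 : 1 + η ≤ (2 + xhat) * t := by nlinarith
      have hhyp : hypg n η t ≤
          1 * 1 * Real.exp (-c * t) * ((2 + xhat) * t) ^ (n + 1) * ((2 + xhat) * t) := by
        unfold hypg
        have e1 : (0:ℝ) ≤ t ^ (-(n : ℝ) / 2) := Real.rpow_nonneg ht0.le _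
        have e2 : (0:ℝ) ≤ (η / (1 + η)) ^ (n - 1) := by positivity
        have e4 : (0:ℝ) ≤ (1 + η + t) ^ (((n : ℝ) - 3) / 2) :=
          Real.rpow_nonneg (by linarith) _
        have P1 : (0:ℝ) ≤ (2 + xhat) * t := mul_nonneg h2x.le ht0.le
        have P2 : (0:ℝ) ≤ ((2 + xhat) * t) ^ (n + 1) := pow_nonneg P1 _
        exact mul_le_mul (mul_le_mul (mul_le_mul (mul_le_mul h1 h2 e2 zero_le_one) h3
          (Real.exp_pos _).le (by norm_num)) h4 e4 (by positivity)) h5 hη1.le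
          (mul_nonneg (by positivity) P2)
      calc p η t ≤ d * hypg n η t := hp_le η t hη0 ht0
        _ ≤ d * (1 * 1 * Real.exp (-c * t) * ((2 + xhat) * t) ^ (n + 1) * ((2 + xhat) * t)) :=
            by exact mul_le_mul_of_nonneg_left hhyp hd0.le
        _ = d * Real.exp (-c * t) * ((2 + xhat) * t) ^ (n + 2) := by ring
    -- bound the integral
    have hI : (∫⁻ η in {η : ℝ | 0 < η ∧ η ≤ t * xhat}, ENNReal.ofReal (p η t)) ≤
        ENNReal.ofReal B := by
      rw [hset]
      calc (∫⁻ η in Set.Ioc (0:ℝ) (t * xhat), ENNReal.ofReal (p η t))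
          ≤ ∫⁻ _ in Set.Ioc (0:ℝ) (t * xhat),
              ENNReal.ofReal (d * Real.exp (-c * t) * ((2 + xhat) * t) ^ (n + 2)) :=
            setLIntegral_mono' measurableSet_Ioc
              (fun η hη => ENNReal.ofReal_le_ofReal (key η hη))
        _ = ENNReal.ofReal (d * Real.exp (-c * t) * ((2 + xhat) * t) ^ (n + 2)) *
              volume (Set.Ioc (0:ℝ) (t * xhat)) := setLIntegral_const _ _
        _ = ENNReal.ofReal (d * Real.exp (-c * t) * ((2 + xhat) * t) ^ (n + 2)) *
              ENNReal.ofReal (t * xhat - 0) := by rw [Real.volume_Ioc]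
        _ = ENNReal.ofReal B := by
            rw [← ENNReal.ofReal_mul (by positivity), hB, sub_zero]
    -- take logarithms
    have hlog : ENNReal.log (∫⁻ η in {η : ℝ | 0 < η ∧ η ≤ t * xhat},
        ENNReal.ofReal (p η t)) ≤ ((Real.log B : ℝ) : EReal) := by
      calc ENNReal.log (∫⁻ η in {η : ℝ | 0 < η ∧ η ≤ t * xhat}, ENNReal.ofReal (p η t))
          ≤ ENNReal.log (ENNReal.ofReal B) := ENNReal.log_monotone hI
        _ = ((Real.log B : ℝ) : EReal) := ENNReal.log_ofReal_of_pos hB_pos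
    have htinv : (0:ℝ) ≤ t⁻¹ := by positivity
    calc ((t⁻¹ : ℝ) : EReal) *
          ENNReal.log (∫⁻ η in {η : ℝ | 0 < η ∧ η ≤ t * xhat}, ENNReal.ofReal (p η t))
        ≤ ((t⁻¹ : ℝ) : EReal) * ((Real.log B : ℝ) : EReal) := by
          exact mul_le_mul_of_nonneg_left hlog (by exact_mod_cast htinv)
      _ = ((t⁻¹ * Real.log B : ℝ) : EReal) := by rw [← EReal.coe_mul]
      _ = ((g₀ t : ℝ) : EReal) := by
          congr 1
          have hlogB : Real.log B = Real.log d + (-c * t) +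
              ((n : ℝ) + 2) * (Real.log (2 + xhat) + Real.log t) +
              (Real.log t + Real.log xhat) := by
            rw [hB, Real.log_mul (by positivity) (by positivity),
              Real.log_mul (by positivity) (by positivity),
              Real.log_mul (by positivity) (by positivity), Real.log_exp, Real.log_pow,
              Real.log_mul (by positivity) (by positivity),
              Real.log_mul (by positivity) (by positivity)]
            push_cast; ring
          rw [hlogB]
          simp only [hg₀, hK]
          field_simp
          ring
  calc Filter.limsup
        (fun t : ℝ => ((t⁻¹ : ℝ) : EReal) *
          ENNReal.log (∫⁻ η in {η : ℝ | 0 < η ∧ η ≤ t * xhat}, ENNReal.ofReal (p η t)))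
        Filter.atTop
      ≤ Filter.limsup (fun t : ℝ => ((g₀ t : ℝ) : EReal)) Filter.atTop :=
        Filter.limsup_le_limsup hbound
    _ = ((-c : ℝ) : EReal) := hg_tendsto.limsup_eq
end

section
/- Let n ≥ 2 be an integer and d > 1, and let p : (0,∞) × (0,∞) → [0,∞) be measurable with p(η,t) ≤ d g_n(η,t) for all η, t > 0. Then for every x̃ > n−1, limsup_{t→∞} (1/t) · log ( ∫_{t x̃}^{∞} p(η,t) dη ) ≤ −(x̃−(n−1))²/4. -/
open MeasureTheory Real Filter

/-!
Put `δ = x̃ - (n - 1)` and write `η = t x̃ + s` with `s ≥ 0`, so that `η - (n - 1) t = δ t + s`.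
Expanding the square, the Gaussian factor of `g_n` is at most `e^{-δ²t/4} e^{-δs/2}`, while the
remaining factors are at most `(1 + η + t)^n ≤ ((x̃ + 2) t)^n (1 + s)^n` for `t ≥ 1`. Half of the
decay `e^{-δs/2}` absorbs `(1 + s)^n`, and integrating `e^{-δs/4}` over `s ≥ 0` bounds the tail
integral by `C tⁿ e^{-δ²t/4}`, whose logarithm divided by `t` tends to `-δ²/4`.
-/

open scoped Nat Topology

theorem hypg_le_pow_mul_exp (n : ℕ) {η t : ℝ} (hη : 0 < η) (ht : 1 ≤ t) :
    hypg n η t ≤ (1 + η + t) ^ n * exp (-(η - ((n : ℝ) - 1) * t) ^ 2 / (4 * t)) := by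
  have hn : (0 : ℝ) ≤ n := n.cast_nonneg
  have ht_pow : t ^ (-(n : ℝ) / 2) ≤ 1 := rpow_le_one_of_one_le_of_nonpos ht (by linarith)
  have hη_pow : (η / (1 + η)) ^ (n - 1) ≤ 1 :=
    pow_le_one₀ (by positivity) ((div_le_one (by linarith)).mpr (by linarith))
  have hb_pow : (1 + η + t) ^ (((n : ℝ) - 3) / 2) * (1 + η) ≤ (1 + η + t) ^ n := by
    calc (1 + η + t) ^ (((n : ℝ) - 3) / 2) * (1 + η)
        ≤ (1 + η + t) ^ ((n : ℝ) - 1) * (1 + η + t) := by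
          gcongr (1 + η + t) ^ ?_ * ?_ <;> linarith
      _ = (1 + η + t) ^ n := by
          rw [← rpow_add_one (by linarith), sub_add_cancel, rpow_natCast]
  calc hypg n η t
      = (t ^ (-(n : ℝ) / 2) * (η / (1 + η)) ^ (n - 1)) *
          ((1 + η + t) ^ (((n : ℝ) - 3) / 2) * (1 + η)) *
          exp (-(η - ((n : ℝ) - 1) * t) ^ 2 / (4 * t)) := by
        rw [hypg]; ring
    _ ≤ 1 * (1 + η + t) ^ n * exp (-(η - ((n : ℝ) - 1) * t) ^ 2 / (4 * t)) := by
        gcongr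
        exact mul_le_one₀ ht_pow (by positivity) hη_pow
    _ = _ := by rw [one_mul]

theorem one_add_pow_le_mul_exp (n : ℕ) {c s : ℝ} (hc : 0 < c) (hs : 0 ≤ s) :
    (1 + s) ^ n ≤ n ! * exp c / c ^ n * exp (c * s) := by
  have h := pow_div_factorial_le_exp (x := c * (1 + s)) (by positivity) n
  rw [div_le_iff₀ (by positivity), mul_pow, mul_add, mul_one, exp_add] at h
  rw [div_mul_eq_mul_div, le_div_iff₀ (by positivity)]
  linarith

theorem exp_neg_sq_div_le (δ s : ℝ) {t : ℝ} (ht : 0 < t) :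
    exp (-(δ * t + s) ^ 2 / (4 * t)) ≤ exp (-(δ ^ 2 / 4 * t)) * exp (-(δ / 2 * s)) := by
  rw [← exp_add, exp_le_exp, div_le_iff₀ (by positivity)]
  nlinarith [sq_nonneg s]

theorem exists_hypg_le_mul_exp (n : ℕ) {x : ℝ} (hx : (n : ℝ) - 1 < x) :
    ∃ M > 0, ∀ t ≥ 1, ∀ η > 0, t * x ≤ η →
      hypg n η t ≤ M * t ^ n * exp (-((x - (n - 1)) ^ 2 / 4 * t)) *
        exp (-((x - (n - 1)) / 4 * (η - t * x))) := by
  set δ := x - (n - 1)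
  have hδ_pos : 0 < δ := by linarith
  have hx2 : 1 < x + 2 := by have := n.cast_nonneg (α := ℝ); linarith
  set K := n ! * exp (δ / 4) / (δ / 4) ^ n
  refine ⟨(x + 2) ^ n * K, by positivity, ?_⟩
  intro t ht η hη hxη
  set s := η - t * x
  have hs : 0 ≤ s := by linarith
  have hpoly : (1 + η + t) ^ n ≤ ((x + 2) * t) ^ n * (K * exp (δ / 4 * s)) := by
    have hbase : 1 + η + t ≤ (x + 2) * t * (1 + s) := by
      nlinarith [mul_nonneg (by nlinarith : 0 ≤ (x + 2) * t - 1) hs]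
    calc (1 + η + t) ^ n ≤ ((x + 2) * t * (1 + s)) ^ n := by gcongr
      _ = ((x + 2) * t) ^ n * (1 + s) ^ n := by rw [mul_pow]
      _ ≤ _ := by gcongr; exact one_add_pow_le_mul_exp n (by positivity) hs
  have hgauss : η - ((n : ℝ) - 1) * t = δ * t + s := by ring
  have hexp : exp (δ / 4 * s) * exp (-(δ / 2 * s)) = exp (-(δ / 4 * s)) := by
    rw [← exp_add]; ring_nf
  calc hypg n η t
      ≤ (1 + η + t) ^ n * exp (-(η - ((n : ℝ) - 1) * t) ^ 2 / (4 * t)) :=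
        hypg_le_pow_mul_exp n hη ht
    _ ≤ ((x + 2) * t) ^ n * (K * exp (δ / 4 * s)) *
          (exp (-(δ ^ 2 / 4 * t)) * exp (-(δ / 2 * s))) := by
        rw [hgauss]
        exact mul_le_mul hpoly (exp_neg_sq_div_le δ s (by linarith)) (by positivity)
          (by positivity)
    _ = (x + 2) ^ n * K * t ^ n * exp (-(δ ^ 2 / 4 * t)) * exp (-(δ / 4 * s)) := by
        rw [mul_pow, ← hexp]; ring

theorem setLIntegral_ofReal_le_of_le_mul_exp {f : ℝ → ℝ} {s : Set ℝ} {a B c : ℝ}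
    (hc : 0 < c) (hB : 0 ≤ B) (hs : s ⊆ Set.Ici a)
    (hf : ∀ η ∈ s, f η ≤ B * exp (-(c * (η - a)))) :
    ∫⁻ η in s, ENNReal.ofReal (f η) ≤ ENNReal.ofReal (B / c) := by
  have hshift : ∀ η, B * exp (-(c * (η - a))) = B * exp (c * a) * exp (-c * η) := by
    intro η; rw [mul_assoc, ← exp_add]; ring_nf
  have hint : ∫ η in Set.Ioi a, B * exp (-(c * (η - a))) = B / c := by
    simp_rw [hshift]
    rw [integral_const_mul, integral_exp_mul_Ioi (neg_lt_zero.mpr hc)]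
    field_simp
    rw [mul_assoc, ← exp_add]; ring_nf; simp
  calc ∫⁻ η in s, ENNReal.ofReal (f η)
      ≤ ∫⁻ η in s, ENNReal.ofReal (B * exp (-(c * (η - a)))) :=
        setLIntegral_mono (by fun_prop) fun η hη => ENNReal.ofReal_le_ofReal (hf η hη)
    _ ≤ ∫⁻ η in Set.Ioi a, ENNReal.ofReal (B * exp (-(c * (η - a)))) := by
        rw [setLIntegral_congr Ioi_ae_eq_Ici]
        exact lintegral_mono_set hs
    _ = ENNReal.ofReal (B / c) := by
        rw [← ofReal_integral_eq_lintegral_ofReal, hint]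
        · simp_rw [hshift]
          exact (integrableOn_exp_mul_Ioi (neg_lt_zero.mpr hc) a).const_mul _
        · exact Eventually.of_forall fun η => by positivity

theorem tendsto_inv_mul_log_mul_pow_mul_exp (n : ℕ) {C : ℝ} (hC : 0 < C) (r : ℝ) :
    Tendsto (fun t => t⁻¹ * log (C * t ^ n * exp (-(r * t)))) atTop (𝓝 (-r)) := by
  have hlog : Tendsto (fun t => log t / t) atTop (𝓝 0) := by
    simpa using tendsto_pow_log_div_mul_add_atTop 1 0 1 one_ne_zero
  have hlim : Tendsto (fun t => t⁻¹ * log C + n * (log t / t) - r) atTop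
      (𝓝 (0 * log C + n * 0 - r)) :=
    ((tendsto_inv_atTop_zero.mul_const _).add (hlog.const_mul _)).sub_const _
  rw [zero_mul, mul_zero, zero_add, zero_sub] at hlim
  refine hlim.congr' ?_
  filter_upwards [eventually_gt_atTop 0] with t ht
  rw [log_mul (by positivity) (exp_pos _).ne', log_mul hC.ne' (by positivity), log_pow, log_exp]
  field_simp
  ring

theorem limsup_inv_mul_log_le_of_le_ofReal {f : ℝ → ENNReal} {g : ℝ → ℝ} {L : ℝ}
    (hfg : ∀ᶠ t in atTop, f t ≤ ENNReal.ofReal (g t)) (hg : ∀ᶠ t in atTop, 0 < g t)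
    (hlim : Tendsto (fun t => t⁻¹ * log (g t)) atTop (𝓝 L)) :
    limsup (fun t : ℝ => ((t⁻¹ : ℝ) : EReal) * ENNReal.log (f t)) atTop ≤ (L : EReal) := by
  rw [← (EReal.tendsto_coe.mpr hlim).limsup_eq]
  refine limsup_le_limsup ?_
  filter_upwards [hfg, hg, eventually_ge_atTop 0] with t hfgt hgt ht
  rw [EReal.coe_mul, ← ENNReal.log_ofReal_of_pos hgt]
  exact mul_le_mul_of_nonneg_left (ENNReal.log_monotone hfgt)
    (EReal.coe_nonneg.mpr (inv_nonneg.mpr ht))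

theorem ldp_upper_bound_upper_tail_general (n : ℕ) (d : ℝ) (hd : 1 < d)
    (p : ℝ → ℝ → ℝ)
    (hp_le : ∀ η t : ℝ, 0 < η → 0 < t → p η t ≤ d * hypg n η t)
    (xtil : ℝ) (hx : (n : ℝ) - 1 < xtil) :
    Filter.limsup
        (fun t : ℝ => ((t⁻¹ : ℝ) : EReal) *
          ENNReal.log (∫⁻ η in {η : ℝ | 0 < η ∧ t * xtil ≤ η}, ENNReal.ofReal (p η t)))
        Filter.atTop ≤
      ((-((xtil - ((n : ℝ) - 1)) ^ 2 / 4) : ℝ) : EReal) := by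
  obtain ⟨M, hM, hhypg⟩ := exists_hypg_le_mul_exp n hx
  set δ := xtil - ((n : ℝ) - 1)
  have hδ : 0 < δ / 4 := by linarith
  have hd_pos : 0 < d := by linarith
  refine limsup_inv_mul_log_le_of_le_ofReal (g := fun t => d * M / (δ / 4) * t ^ n *
    exp (-(δ ^ 2 / 4 * t))) ?_ ?_ ?_
  · filter_upwards [eventually_ge_atTop 1] with t ht
    have hbound := setLIntegral_ofReal_le_of_le_mul_exp (f := (p · t))
      (s := {η | 0 < η ∧ t * xtil ≤ η}) (B := d * M * t ^ n * exp (-(δ ^ 2 / 4 * t)))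
      hδ (by positivity) (fun _ hη => hη.2) fun η ⟨hη, hxη⟩ => by
        grw [hp_le η t hη (by linarith), hhypg t ht η hη hxη]
        exact le_of_eq (by ring)
    exact hbound.trans_eq (by congr 1; ring)
  · filter_upwards [eventually_gt_atTop 0] with t ht
    positivity
  · simpa only [neg_div] using tendsto_inv_mul_log_mul_pow_mul_exp n (by positivity) _

/-- Upper-tail large deviation upper bound for the radial component of hyperbolic
Brownian motion: for every `x̃ > n-1`,
`limsup_{t→∞} (1/t) log P(D_n(t)/t ≥ x̃) ≤ -(x̃-(n-1))²/4`. -/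
theorem ldp_upper_bound_upper_tail (n : ℕ) (hn : 2 ≤ n) (d : ℝ) (hd : 1 < d)
    (p : ℝ → ℝ → ℝ) (hp : Measurable (Function.uncurry p))
    (hp_nonneg : ∀ η t : ℝ, 0 < η → 0 < t → 0 ≤ p η t)
    (hp_le : ∀ η t : ℝ, 0 < η → 0 < t → p η t ≤ d * hypg n η t)
    (xtil : ℝ) (hx : (n : ℝ) - 1 < xtil) :
    Filter.limsup
        (fun t : ℝ => ((t⁻¹ : ℝ) : EReal) *
          ENNReal.log (∫⁻ η in {η : ℝ | 0 < η ∧ t * xtil ≤ η}, ENNReal.ofReal (p η t)))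
        Filter.atTop ≤
      ((-((xtil - ((n : ℝ) - 1)) ^ 2 / 4) : ℝ) : EReal) :=
  ldp_upper_bound_upper_tail_general n d hd p hp_le xtil hx
end

section
/- Let n ≥ 2 be an integer, β ∈ (0,1/2), and d > 1, and let p : (0,∞) × (0,∞) → [0,∞) be measurable with p(η,t) ≥ d^{−1} g_n(η,t) for all η, t > 0. Then for every x ∈ ℝ and every open set G ⊆ ℝ with x ∈ G, liminf_{t→∞} t^{2β−1} · log ( ∫_{{η > 0 : t^{β−1}(η−(n−1)t) ∈ G}} p(η,t) dη ) ≥ −x²/4. -/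
open MeasureTheory Real Filter Topology

set_option maxHeartbeats 1000000

lemma mdp_key (n : ℕ) (hn : 2 ≤ n) (β : ℝ) (hβ0 : 0 < β) (hβ : β < 1 / 2)
    (d : ℝ) (hd : 1 < d)
    (p : ℝ → ℝ → ℝ)
    (hp_ge : ∀ η t : ℝ, 0 < η → 0 < t → d⁻¹ * hypg n η t ≤ p η t)
    (x : ℝ) (G : Set ℝ) (δ : ℝ) (hδ : 0 < δ)
    (hsub : Set.Icc (x - δ) (x + δ) ⊆ G) :
    ((-((|x| + δ) ^ 2 / 4) : ℝ) : EReal) ≤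
      Filter.liminf
        (fun t : ℝ => ((t ^ (2 * β - 1) : ℝ) : EReal) *
          ENNReal.log (∫⁻ η in {η : ℝ | 0 < η ∧ t ^ (β - 1) * (η - ((n : ℝ) - 1) * t) ∈ G},
            ENNReal.ofReal (p η t)))
        Filter.atTop := by
  set m : ℝ := (n : ℝ) - 1 with hm_def
  set e : ℝ := ((n : ℝ) - 3) / 2 with he_def
  set a : ℝ := |e| with ha_def
  set M : ℝ := |x| + δ with hM_def
  set C : ℝ := d⁻¹ * ((1 / 2 : ℝ) ^ (n - 1) * (((n : ℝ) + 2) ^ (-a) * (2 * δ))) with hC_def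
  set q : ℝ := -(n : ℝ) / 2 + -a + (1 - β) with hq_def
  have hm1 : (1 : ℝ) ≤ m := by
    rw [hm_def]
    have : (2 : ℝ) ≤ (n : ℝ) := by exact_mod_cast hn
    linarith
  have hC0 : 0 < C := by
    rw [hC_def]
    have : (0:ℝ) < ((n : ℝ) + 2) ^ (-a) := Real.rpow_pos_of_pos (by positivity) _
    positivity
  -- the real-valued lower-bound function
  set r : ℝ → ℝ := fun t =>
    t ^ (2 * β - 1) * Real.log C + q * (t ^ (2 * β - 1) * Real.log t) - M ^ 2 / 4 with hr_def
  have hβ' : 0 < 1 - 2 * β := by linarith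
  -- r tends to -(M^2/4)
  have hrT : Tendsto r atTop (𝓝 (-(M ^ 2 / 4))) := by
    have h1 : Tendsto (fun t : ℝ => t ^ (2 * β - 1)) atTop (𝓝 0) := by
      have := tendsto_rpow_neg_atTop hβ'
      convert this using 2 with t
      ring_nf
    have h2 : Tendsto (fun t : ℝ => t ^ (2 * β - 1) * Real.log t) atTop (𝓝 0) := by
      have h3 := (isLittleO_log_rpow_atTop hβ').tendsto_div_nhds_zero
      apply h3.congr'
      filter_upwards [eventually_gt_atTop (0:ℝ)] with t ht
      rw [div_eq_inv_mul, ← Real.rpow_neg ht.le]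
      ring_nf
    have := ((h1.mul_const (Real.log C)).add (h2.const_mul q)).sub_const (M ^ 2 / 4)
    simpa using this
  -- eventual lower bound
  have hev : ∀ᶠ t in atTop, ((r t : ℝ) : EReal) ≤
      ((t ^ (2 * β - 1) : ℝ) : EReal) *
        ENNReal.log (∫⁻ η in {η : ℝ | 0 < η ∧ t ^ (β - 1) * (η - ((n : ℝ) - 1) * t) ∈ G},
          ENNReal.ofReal (p η t)) := by
    filter_upwards [eventually_ge_atTop (1:ℝ),
      (tendsto_rpow_atTop hβ0).eventually_ge_atTop (1 + |x - δ| + |x + δ|)] with t ht1 htK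
    have ht : (0:ℝ) < t := lt_of_lt_of_le one_pos ht1
    have hd0 : (0:ℝ) < d := lt_trans one_pos hd
    set s : ℝ := t ^ (1 - β) with hs_def
    have hs0 : 0 < s := Real.rpow_pos_of_pos ht _
    have hs1 : 1 ≤ s := Real.one_le_rpow ht1 (by linarith)
    have hβs : 0 < t ^ β := Real.rpow_pos_of_pos ht _
    have hsb : t ^ β * s = t := by
      rw [hs_def, ← Real.rpow_add ht]; norm_num
    set L : ℝ := m * t + (x - δ) * s with hL_def
    set U : ℝ := m * t + (x + δ) * s with hU_def
    have hxd1 : -|x - δ| ≤ x - δ := neg_abs_le _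
    have hxd2 : x + δ ≤ |x + δ| := le_abs_self _
    have habs1 : (0:ℝ) ≤ |x - δ| := abs_nonneg _
    have habs2 : (0:ℝ) ≤ |x + δ| := abs_nonneg _
    have hL1 : 1 ≤ L := by
      nlinarith [mul_nonneg (sub_nonneg.2 htK) hs0.le,
        mul_nonneg (sub_nonneg.2 hm1) ht.le,
        mul_nonneg (by linarith : (0:ℝ) ≤ x - δ + |x - δ|) hs0.le,
        mul_nonneg habs2 hs0.le]
    have hUn : U ≤ (n:ℝ) * t := by
      nlinarith [mul_nonneg (sub_nonneg.2 htK) hs0.le,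
        mul_nonneg (by linarith : (0:ℝ) ≤ |x + δ| - (x + δ)) hs0.le,
        mul_nonneg habs1 hs0.le]
    have hts : t ^ (β - 1) = s⁻¹ := by
      rw [hs_def, show β - 1 = -(1 - β) by ring, Real.rpow_neg ht.le]
    -- the rectangle is contained in the event
    have hIS : Set.Icc L U ⊆ {η : ℝ | 0 < η ∧ t ^ (β - 1) * (η - m * t) ∈ G} := by
      intro η hη
      obtain ⟨hηL, hηU⟩ := hη
      have hη1 : 1 ≤ η := le_trans hL1 hηL
      refine ⟨by linarith, hsub ?_⟩
      rw [hts, Set.mem_Icc]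
      constructor
      · rw [inv_mul_eq_div, le_div_iff₀ hs0]; linarith
      · rw [inv_mul_eq_div, div_le_iff₀ hs0]; linarith
    -- pointwise lower bound for hypg on the rectangle
    set lbE : ℝ := t ^ (-(n : ℝ) / 2) * (1 / 2 : ℝ) ^ (n - 1) *
        Real.exp (-(M ^ 2 / 4) * t ^ (1 - 2 * β)) * (((n : ℝ) + 2) * t) ^ (-a) * 1
      with hlbE_def
    have e1 : s * s = t ^ (1 - 2 * β) * t := by
      rw [hs_def, ← Real.rpow_add ht, show (1 - β) + (1 - β) = (1 - 2 * β) + 1 by ring,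
        Real.rpow_add ht, Real.rpow_one]
    have hlb : ∀ η ∈ Set.Icc L U, lbE ≤ hypg n η t := by
      intro η hη
      obtain ⟨hηL, hηU⟩ := hη
      have hη1 : 1 ≤ η := le_trans hL1 hηL
      have hη0 : (0:ℝ) < η := by linarith
      have b1 : ((1:ℝ) / 2) ^ (n - 1) ≤ (η / (1 + η)) ^ (n - 1) := by
        apply pow_le_pow_left₀ (by norm_num)
        rw [le_div_iff₀ (by linarith)]; linarith
      have hxm : -M ≤ x - δ := by rw [hM_def]; linarith [neg_abs_le x]
      have hxM : x + δ ≤ M := by rw [hM_def]; linarith [le_abs_self x]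
      have l1 : -(M * s) ≤ (x - δ) * s := by
        calc -(M * s) = (-M) * s := by ring
          _ ≤ (x - δ) * s := mul_le_mul_of_nonneg_right hxm hs0.le
      have l2 : (x + δ) * s ≤ M * s := mul_le_mul_of_nonneg_right hxM hs0.le
      have hMs : (η - m * t) ^ 2 ≤ (M * s) ^ 2 := by
        apply sq_le_sq'
        · linarith
        · linarith
      have b2 : Real.exp (-(M ^ 2 / 4) * t ^ (1 - 2 * β)) ≤
          Real.exp (-(η - m * t) ^ 2 / (4 * t)) := by
        apply Real.exp_le_exp.2
        rw [show -(M ^ 2 / 4) * t ^ (1 - 2 * β) = -((M * s) ^ 2) / (4 * t) from by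
          rw [eq_div_iff (by positivity)]; linear_combination (M ^ 2) * e1]
        rw [neg_div, neg_div, neg_le_neg_iff]
        exact (div_le_div_iff_of_pos_right (by positivity)).2 hMs
      have h1ηt : (1:ℝ) ≤ 1 + η + t := by linarith
      have b3 : (((n : ℝ) + 2) * t) ^ (-a) ≤ (1 + η + t) ^ e := by
        have h2 : 1 + η + t ≤ ((n:ℝ) + 2) * t := by
          have hηU' : η ≤ (n:ℝ) * t := le_trans hηU hUn
          linarith
        rcases le_or_gt 0 e with he | he
        · have haeq : a = e := abs_of_nonneg he
          calc (((n:ℝ) + 2) * t) ^ (-a) ≤ (((n:ℝ) + 2) * t) ^ (0:ℝ) :=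
              Real.rpow_le_rpow_of_exponent_le (le_trans h1ηt h2) (by rw [haeq]; linarith)
            _ = 1 := Real.rpow_zero _
            _ = (1 + η + t) ^ (0:ℝ) := (Real.rpow_zero _).symm
            _ ≤ (1 + η + t) ^ e := Real.rpow_le_rpow_of_exponent_le h1ηt he
        · have haeq : -a = e := by rw [ha_def, abs_of_neg he]; ring
          rw [haeq]
          exact Real.rpow_le_rpow_of_nonpos (by linarith) h2 he.le
      have b4 : (1:ℝ) ≤ 1 + η := by linarith
      rw [hlbE_def, hypg, ← hm_def, ← he_def]
      gcongr
    have hlbE0 : (0:ℝ) ≤ lbE := by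
      rw [hlbE_def]
      have := Real.rpow_nonneg ht.le (-(n:ℝ)/2)
      have : (0:ℝ) ≤ (((n:ℝ) + 2) * t) ^ (-a) := Real.rpow_nonneg (by positivity) _
      positivity
    have hp' : ∀ η ∈ Set.Icc L U, d⁻¹ * lbE ≤ p η t := by
      intro η hη
      have hη0 : (0:ℝ) < η := lt_of_lt_of_le one_pos (le_trans hL1 hη.1)
      exact le_trans (mul_le_mul_of_nonneg_left (hlb η hη) (by positivity)) (hp_ge η t hη0 ht)
    -- integral lower bound
    have hint : ENNReal.ofReal (d⁻¹ * lbE * (2 * δ * s)) ≤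
        ∫⁻ η in {η : ℝ | 0 < η ∧ t ^ (β - 1) * (η - m * t) ∈ G}, ENNReal.ofReal (p η t) := by
      calc ENNReal.ofReal (d⁻¹ * lbE * (2 * δ * s))
          = ENNReal.ofReal (d⁻¹ * lbE) * volume (Set.Icc L U) := by
            rw [Real.volume_Icc, show U - L = 2 * δ * s from by rw [hU_def, hL_def]; ring,
              ← ENNReal.ofReal_mul (by positivity)]
        _ = ∫⁻ _ in Set.Icc L U, ENNReal.ofReal (d⁻¹ * lbE) := (setLIntegral_const _ _).symm
        _ ≤ ∫⁻ η in Set.Icc L U, ENNReal.ofReal (p η t) :=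
            setLIntegral_mono' measurableSet_Icc fun η hη => ENNReal.ofReal_le_ofReal (hp' η hη)
        _ ≤ _ := lintegral_mono_set hIS
    have hVeq : d⁻¹ * lbE * (2 * δ * s) =
        C * t ^ q * Real.exp (-(M ^ 2 / 4) * t ^ (1 - 2 * β)) := by
      rw [hlbE_def, hC_def, hq_def, hs_def, Real.mul_rpow (by positivity) ht.le,
        Real.rpow_add ht, Real.rpow_add ht]
      ring
    have hV0 : (0:ℝ) < d⁻¹ * lbE * (2 * δ * s) := by
      rw [hVeq]
      have : (0:ℝ) < t ^ q := Real.rpow_pos_of_pos ht _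
      positivity
    have hlogle : ((Real.log (d⁻¹ * lbE * (2 * δ * s)) : ℝ) : EReal) ≤
        ENNReal.log (∫⁻ η in {η : ℝ | 0 < η ∧ t ^ (β - 1) * (η - m * t) ∈ G},
          ENNReal.ofReal (p η t)) := by
      rw [← ENNReal.log_ofReal_of_pos hV0]
      exact ENNReal.log_monotone hint
    calc ((r t : ℝ) : EReal)
        = ((t ^ (2 * β - 1) * Real.log (d⁻¹ * lbE * (2 * δ * s)) : ℝ) : EReal) := by
          have h0 : t ^ (2 * β - 1) * t ^ (1 - 2 * β) = 1 := by
            rw [← Real.rpow_add ht]; norm_num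
          have hgt0 : (0:ℝ) < t ^ q := Real.rpow_pos_of_pos ht _
          congr 1
          rw [show Real.log (d⁻¹ * lbE * (2 * δ * s)) =
              Real.log C + q * Real.log t + -(M ^ 2 / 4) * t ^ (1 - 2 * β) from by
            rw [hVeq, Real.log_mul (by positivity) (Real.exp_ne_zero _),
              Real.log_mul (ne_of_gt hC0) (ne_of_gt hgt0), Real.log_rpow ht, Real.log_exp]]
          simp only [hr_def]
          linear_combination (M ^ 2 / 4 : ℝ) * h0
      _ = ((t ^ (2 * β - 1) : ℝ) : EReal) *
            ((Real.log (d⁻¹ * lbE * (2 * δ * s)) : ℝ) : EReal) := by rw [← EReal.coe_mul]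
      _ ≤ _ := mul_le_mul_of_nonneg_left hlogle
            (EReal.coe_nonneg.2 (Real.rpow_nonneg ht.le _))
  calc ((-((|x| + δ) ^ 2 / 4) : ℝ) : EReal)
      = Filter.liminf (fun t : ℝ => ((r t : ℝ) : EReal)) atTop := by
        rw [← hM_def]
        exact ((EReal.tendsto_coe.2 hrT).liminf_eq).symm
    _ ≤ _ := Filter.liminf_le_liminf hev

/-- Moderate deviation lower bound for the radial component of hyperbolic Brownian motion:
for every `x ∈ ℝ` and open `G ∋ x`,
`liminf_{t→∞} t^{2β-1} log P(t^{β-1}(D_n(t)-(n-1)t) ∈ G) ≥ -x²/4`. -/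
theorem mdp_lower_bound (n : ℕ) (hn : 2 ≤ n) (β : ℝ) (hβ0 : 0 < β) (hβ : β < 1 / 2)
    (d : ℝ) (hd : 1 < d)
    (p : ℝ → ℝ → ℝ) (hp : Measurable (Function.uncurry p))
    (hp_nonneg : ∀ η t : ℝ, 0 < η → 0 < t → 0 ≤ p η t)
    (hp_ge : ∀ η t : ℝ, 0 < η → 0 < t → d⁻¹ * hypg n η t ≤ p η t)
    (x : ℝ) (G : Set ℝ) (hG : IsOpen G) (hxG : x ∈ G) :
    ((-(x ^ 2 / 4) : ℝ) : EReal) ≤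
      Filter.liminf
        (fun t : ℝ => ((t ^ (2 * β - 1) : ℝ) : EReal) *
          ENNReal.log (∫⁻ η in {η : ℝ | 0 < η ∧ t ^ (β - 1) * (η - ((n : ℝ) - 1) * t) ∈ G},
            ENNReal.ofReal (p η t)))
        Filter.atTop := by
  apply le_of_forall_lt_imp_le_of_dense
  intro c hc
  induction c using EReal.rec with
  | bot => exact bot_le
  | top => exact absurd hc (by simp)
  | coe c =>
    have hc' : c < -(x ^ 2 / 4) := by exact_mod_cast hc
    obtain ⟨ε, hε, hball⟩ := Metric.isOpen_iff.1 hG x hxG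
    set κ : ℝ := -4 * c - x ^ 2 with hκ_def
    have hκ0 : 0 < κ := by rw [hκ_def]; linarith
    set δ : ℝ := min (ε / 2) (min 1 (κ / (2 * |x| + 2))) with hδ_def
    have habs : (0:ℝ) ≤ |x| := abs_nonneg x
    have hδ0 : 0 < δ := by
      rw [hδ_def]
      refine lt_min (by linarith) (lt_min one_pos (by positivity))
    have hδ1 : δ ≤ 1 := le_trans (min_le_right _ _) (min_le_left _ _)
    have hδ2 : δ ≤ κ / (2 * |x| + 2) := le_trans (min_le_right _ _) (min_le_right _ _)
    have hδε : δ ≤ ε / 2 := min_le_left _ _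
    have hsub : Set.Icc (x - δ) (x + δ) ⊆ G := by
      intro y hy
      apply hball
      rw [Metric.mem_ball, Real.dist_eq, abs_lt]
      constructor <;> [linarith [hy.1]; linarith [hy.2]]
    have hδκ : δ * (2 * |x| + 2) ≤ κ := by
      rw [← le_div_iff₀ (by positivity)]
      exact hδ2
    have hcM : c ≤ -((|x| + δ) ^ 2 / 4) := by
      nlinarith [sq_abs x, mul_self_nonneg δ]
    calc (c : EReal) ≤ ((-((|x| + δ) ^ 2 / 4) : ℝ) : EReal) := by exact_mod_cast hcM
      _ ≤ _ := mdp_key n hn β hβ0 hβ d hd p hp_ge x G δ hδ0 hsub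
end

section
/- Let n ≥ 2 be an integer, β ∈ (0,1/2), and d > 1, and let p : (0,∞) × (0,∞) → [0,∞) be measurable with p(η,t) ≤ d g_n(η,t) for all η, t > 0. Then for every x̂ < 0, limsup_{t→∞} t^{2β−1} · log ( ∫_{{η > 0 : η ≤ x̂ t^{1−β} + (n−1)t}} p(η,t) dη ) ≤ −x̂²/4. -/
open MeasureTheory Real Filter

/-- `t ^ c * log t → 0` as `t → ∞` when `c < 0`. -/
lemma rpow_mul_log_tendsto {c : ℝ} (hc : c < 0) :
    Tendsto (fun t : ℝ => t ^ c * Real.log t) atTop (nhds 0) := by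
  have h := (isLittleO_log_rpow_atTop (show (0:ℝ) < -c by linarith)).tendsto_div_nhds_zero
  refine h.congr' ?_
  filter_upwards [eventually_gt_atTop (0:ℝ)] with t ht
  rw [div_eq_mul_inv, ← Real.rpow_neg ht.le, neg_neg, mul_comm]

/-- The logarithm of the explicit upper bound used in the Chernoff-type estimate. -/
noncomputable def mdpL (n : ℕ) (d β xhat t : ℝ) : ℝ :=
  Real.log d + ((n:ℝ)/2 + 1) * Real.log (1 + n*t) - xhat^2/4 * t ^ (1 - 2*β)
    + Real.log (((n:ℝ) - 1) * t)

lemma mdpL_tendsto (n : ℕ) (hn : 2 ≤ n) (β : ℝ) (hβ0 : 0 < β)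
    (hβ : β < 1 / 2) (d : ℝ) (xhat : ℝ) :
    Tendsto (fun t : ℝ => t ^ (2*β-1) * mdpL n d β xhat t) atTop (nhds (-(xhat^2/4))) := by
  have hc : 2*β - 1 < 0 := by linarith
  have hn1 : (1:ℝ) ≤ (n:ℝ) - 1 := by
    have : (2:ℝ) ≤ n := by exact_mod_cast hn
    linarith
  have h1 : Tendsto (fun t:ℝ => t ^ (2*β-1)) atTop (nhds 0) := by
    have h := tendsto_rpow_neg_atTop (show (0:ℝ) < 1-2*β by linarith)
    refine h.congr fun x => ?_
    congr 1; ring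
  have h2 : Tendsto (fun t:ℝ => t ^ (2*β-1) * Real.log t) atTop (nhds 0) :=
    rpow_mul_log_tendsto hc
  have hA : Tendsto (fun t:ℝ => t^(2*β-1) * Real.log d) atTop (nhds 0) := by
    simpa using h1.mul_const (Real.log d)
  have hD : Tendsto (fun t:ℝ => t^(2*β-1) * Real.log (((n:ℝ)-1)*t)) atTop (nhds 0) := by
    have h' : Tendsto (fun t:ℝ => t^(2*β-1)*Real.log ((n:ℝ)-1) + t^(2*β-1)*Real.log t)
        atTop (nhds 0) := by simpa using (h1.mul_const (Real.log ((n:ℝ)-1))).add h2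
    refine h'.congr' ?_
    filter_upwards [eventually_gt_atTop (0:ℝ)] with t ht
    rw [Real.log_mul (by linarith) (ne_of_gt ht)]; ring
  have hB : Tendsto (fun t:ℝ => t^(2*β-1) * Real.log (1 + n*t)) atTop (nhds 0) := by
    have hup : Tendsto (fun t:ℝ => t^(2*β-1)*Real.log ((n:ℝ)+1) + t^(2*β-1)*Real.log t)
        atTop (nhds 0) := by simpa using (h1.mul_const (Real.log ((n:ℝ)+1))).add h2
    refine tendsto_of_tendsto_of_tendsto_of_le_of_le' tendsto_const_nhds hup ?_ ?_
    · filter_upwards [eventually_ge_atTop (1:ℝ)] with t ht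
      have hnt : (0:ℝ) ≤ n*t := mul_nonneg (Nat.cast_nonneg n) (by linarith)
      exact mul_nonneg (Real.rpow_nonneg (by linarith) _) (Real.log_nonneg (by linarith))
    · filter_upwards [eventually_ge_atTop (1:ℝ)] with t ht
      have h0t : (0:ℝ) < t := by linarith
      have hnt : (0:ℝ) ≤ n*t := mul_nonneg (Nat.cast_nonneg n) (by linarith)
      have hle : Real.log (1+n*t) ≤ Real.log ((n:ℝ)+1) + Real.log t := by
        rw [← Real.log_mul (by positivity) (ne_of_gt h0t)]
        have : (1:ℝ)+n*t ≤ ((n:ℝ)+1)*t := by nlinarith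
        exact Real.log_le_log (by linarith) this
      calc t^(2*β-1)*Real.log (1+n*t) ≤ t^(2*β-1)*(Real.log ((n:ℝ)+1)+Real.log t) :=
            mul_le_mul_of_nonneg_left hle (Real.rpow_nonneg h0t.le _)
        _ = t^(2*β-1)*Real.log ((n:ℝ)+1) + t^(2*β-1)*Real.log t := by ring
  have hC : Tendsto (fun t:ℝ => t^(2*β-1) * t^(1-2*β)) atTop (nhds 1) := by
    refine Tendsto.congr' ?_ tendsto_const_nhds
    filter_upwards [eventually_gt_atTop (0:ℝ)] with t ht
    rw [← Real.rpow_add ht, show (2*β-1)+(1-2*β) = 0 by ring, Real.rpow_zero]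
  have hlim2 := ((hA.add (hB.const_mul ((n:ℝ)/2+1))).sub (hC.const_mul (xhat^2/4))).add hD
  norm_num at hlim2
  refine hlim2.congr fun t => ?_
  simp only [mdpL]; ring

set_option maxHeartbeats 1000000 in
lemma mdp_eventual_bound (n : ℕ) (hn : 2 ≤ n) (β : ℝ) (hβ0 : 0 < β)
    (hβ : β < 1 / 2) (d : ℝ) (hd : 1 < d)
    (p : ℝ → ℝ → ℝ)
    (hp_le : ∀ η t : ℝ, 0 < η → 0 < t → p η t ≤ d * hypg n η t)
    (xhat : ℝ) (hx : xhat < 0) :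
    ∀ᶠ t in atTop,
      ((t ^ (2 * β - 1) : ℝ) : EReal) *
          ENNReal.log (∫⁻ η in {η : ℝ | 0 < η ∧ η ≤ xhat * t ^ (1 - β) + ((n : ℝ) - 1) * t},
            ENNReal.ofReal (p η t)) ≤
        ((t ^ (2*β-1) * mdpL n d β xhat t : ℝ) : EReal) := by
  have hd0 : (0:ℝ) < d := by linarith
  have hn1 : (1:ℝ) ≤ (n:ℝ) - 1 := by
    have : (2:ℝ) ≤ n := by exact_mod_cast hn
    linarith
  filter_upwards [eventually_ge_atTop (1:ℝ)] with t ht1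
  have ht0 : (0:ℝ) < t := by linarith
  have hvneg : xhat * t ^ (1-β) < 0 :=
    mul_neg_of_neg_of_pos hx (Real.rpow_pos_of_pos ht0 _)
  have hntpos : (0:ℝ) < 1 + n*t := by
    have := mul_nonneg (Nat.cast_nonneg n : (0:ℝ) ≤ n) ht0.le
    linarith
  have hn1t : (0:ℝ) < ((n:ℝ)-1)*t := mul_pos (by linarith) ht0
  set b : ℝ := xhat * t ^ (1-β) + ((n:ℝ)-1)*t with hb
  set K : ℝ := d * ((1 + n*t) ^ ((n:ℝ)/2 + 1) * Real.exp (-(xhat^2/4) * t ^ (1-2*β)))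
    with hKdef
  have hKpos : 0 < K :=
    mul_pos hd0 (mul_pos (Real.rpow_pos_of_pos hntpos _) (Real.exp_pos _))
  -- pointwise bound
  have hK : ∀ η ∈ Set.Ioc (0:ℝ) b, p η t ≤ K := by
    intro η hη
    obtain ⟨hη0, hη2⟩ := hη
    have hη1 : η ≤ ((n:ℝ)-1)*t := by rw [hb] at hη2; linarith
    refine (hp_le η t hη0 ht0).trans ?_
    rw [hKdef]
    refine mul_le_mul_of_nonneg_left ?_ hd0.le
    have e1 : t ^ (-(n:ℝ)/2) ≤ 1 := by
      apply Real.rpow_le_one_of_one_le_of_nonpos ht1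
      have : (0:ℝ) ≤ n := Nat.cast_nonneg n
      linarith
    have e1' : 0 ≤ t ^ (-(n:ℝ)/2) := (Real.rpow_pos_of_pos ht0 _).le
    have e2 : (η / (1+η)) ^ (n-1) ≤ 1 :=
      pow_le_one₀ (div_nonneg hη0.le (by linarith)) ((div_le_one (by linarith)).2 (by linarith))
    have e2' : (0:ℝ) ≤ (η / (1+η)) ^ (n-1) := pow_nonneg (div_nonneg hη0.le (by linarith)) _
    have e3 : Real.exp (-(η - ((n:ℝ)-1)*t)^2 / (4*t)) ≤ Real.exp (-(xhat^2/4) * t^(1-2*β)) := by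
      rw [Real.exp_le_exp]
      have hw : η - ((n:ℝ)-1)*t ≤ xhat * t^(1-β) := by rw [hb] at hη2; linarith
      have hsq : (xhat * t^(1-β))^2 ≤ (η - ((n:ℝ)-1)*t)^2 := by
        nlinarith [mul_nonneg (sub_nonneg.2 hw)
          (by linarith : (0:ℝ) ≤ -(xhat * t^(1-β) + (η - ((n:ℝ)-1)*t)))]
      have hv2 : (xhat * t^(1-β))^2 = xhat^2 * (t^(1-2*β) * t) := by
        have h1 : t^(1-β) * t^(1-β) = t^(1-2*β) * t := by
          rw [← Real.rpow_add ht0, ← Real.rpow_add_one ht0.ne']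
          congr 1; ring
        calc (xhat * t^(1-β))^2 = xhat^2 * (t^(1-β) * t^(1-β)) := by ring
          _ = xhat^2 * (t^(1-2*β) * t) := by rw [h1]
      have h4t : (0:ℝ) < 4*t := by linarith
      rw [neg_div, neg_mul, neg_le_neg_iff, le_div_iff₀ h4t]
      nlinarith [hsq, hv2]
    have e4 : (1+η+t) ^ (((n:ℝ)-3)/2) ≤ (1+n*t) ^ ((n:ℝ)/2) := by
      have hb1 : (1:ℝ) ≤ 1 + η + t := by linarith
      have hbn : 1 + η + t ≤ 1 + n*t := by
        have : ((n:ℝ)-1)*t + t = n*t := by ring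
        linarith
      refine le_trans (Real.rpow_le_rpow_of_exponent_le hb1
        (show ((n:ℝ)-3)/2 ≤ (n:ℝ)/2 by linarith)) ?_
      exact Real.rpow_le_rpow (by linarith) hbn (by positivity)
    have e4' : (0:ℝ) ≤ (1+η+t) ^ (((n:ℝ)-3)/2) := (Real.rpow_pos_of_pos (by linarith) _).le
    have hrp : (0:ℝ) ≤ (1+n*t) ^ ((n:ℝ)/2) := (Real.rpow_pos_of_pos hntpos _).le
    have e5 : 1 + η ≤ 1 + n*t := by
      have : ((n:ℝ)-1)*t ≤ n*t := by nlinarith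
      linarith
    have h12 : t ^ (-(n:ℝ)/2) * (η / (1+η)) ^ (n-1) ≤ 1 * 1 :=
      mul_le_mul e1 e2 e2' zero_le_one
    have h123 : t ^ (-(n:ℝ)/2) * (η / (1+η)) ^ (n-1) *
        Real.exp (-(η - ((n:ℝ)-1)*t)^2 / (4*t)) ≤
        1 * 1 * Real.exp (-(xhat^2/4) * t^(1-2*β)) :=
      mul_le_mul h12 e3 (Real.exp_pos _).le (by norm_num)
    have h1234 : t ^ (-(n:ℝ)/2) * (η / (1+η)) ^ (n-1) *
        Real.exp (-(η - ((n:ℝ)-1)*t)^2 / (4*t)) * (1+η+t) ^ (((n:ℝ)-3)/2) ≤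
        1 * 1 * Real.exp (-(xhat^2/4) * t^(1-2*β)) * (1+n*t) ^ ((n:ℝ)/2) :=
      mul_le_mul h123 e4 e4'
        (by positivity)
    have h12345 := mul_le_mul h1234 e5 (by linarith)
      (mul_nonneg (by positivity) hrp)
    refine le_trans h12345 (le_of_eq ?_)
    rw [Real.rpow_add_one (ne_of_gt hntpos) ((n:ℝ)/2)]
    ring
  -- integral bound
  have hIoc : {η : ℝ | 0 < η ∧ η ≤ b} = Set.Ioc (0:ℝ) b := rfl
  have hI : (∫⁻ η in {η : ℝ | 0 < η ∧ η ≤ b}, ENNReal.ofReal (p η t)) ≤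
      ENNReal.ofReal (Real.exp (mdpL n d β xhat t)) := by
    rw [hIoc]
    have step1 : (∫⁻ η in Set.Ioc (0:ℝ) b, ENNReal.ofReal (p η t)) ≤
        ∫⁻ _ in Set.Ioc (0:ℝ) b, ENNReal.ofReal K :=
      setLIntegral_mono measurable_const fun η hη => ENNReal.ofReal_le_ofReal (hK η hη)
    rw [setLIntegral_const, Real.volume_Ioc] at step1
    refine step1.trans ?_
    have hble : b - 0 ≤ ((n:ℝ)-1)*t := by rw [hb]; linarith
    calc ENNReal.ofReal K * ENNReal.ofReal (b - 0)
        ≤ ENNReal.ofReal K * ENNReal.ofReal (((n:ℝ)-1)*t) :=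
          mul_le_mul_right (ENNReal.ofReal_le_ofReal hble) _
      _ = ENNReal.ofReal (K * (((n:ℝ)-1)*t)) := (ENNReal.ofReal_mul hKpos.le).symm
      _ = ENNReal.ofReal (Real.exp (mdpL n d β xhat t)) := by
          congr 1
          have hlogK : Real.log (K * (((n:ℝ)-1)*t)) = mdpL n d β xhat t := by
            rw [hKdef, Real.log_mul (by positivity) (ne_of_gt hn1t),
              Real.log_mul (ne_of_gt hd0) (by positivity),
              Real.log_mul (by positivity) (Real.exp_ne_zero _),
              Real.log_rpow hntpos, Real.log_exp, mdpL]
            ring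
          rw [← hlogK, Real.exp_log (mul_pos hKpos hn1t)]
  -- logs and multiplication
  have hlog : ENNReal.log (∫⁻ η in {η : ℝ | 0 < η ∧ η ≤ b}, ENNReal.ofReal (p η t)) ≤
      ((mdpL n d β xhat t : ℝ) : EReal) := by
    refine le_trans (ENNReal.log_monotone hI) ?_
    rw [ENNReal.log_ofReal_of_pos (Real.exp_pos _), Real.log_exp]
  have hcoef : (0:EReal) ≤ ((t ^ (2*β-1) : ℝ) : EReal) := by
    exact_mod_cast (Real.rpow_nonneg ht0.le _)
  calc ((t ^ (2 * β - 1) : ℝ) : EReal) *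
        ENNReal.log (∫⁻ η in {η : ℝ | 0 < η ∧ η ≤ b}, ENNReal.ofReal (p η t))
      ≤ ((t ^ (2 * β - 1) : ℝ) : EReal) * ((mdpL n d β xhat t : ℝ) : EReal) :=
        mul_le_mul_of_nonneg_left hlog hcoef
    _ = ((t ^ (2*β-1) * mdpL n d β xhat t : ℝ) : EReal) := by rw [← EReal.coe_mul]

/-- Lower-tail moderate deviation upper bound for the radial component of hyperbolic
Brownian motion: for every `x̂ < 0`,
`limsup_{t→∞} t^{2β-1} log P(t^{β-1}(D_n(t)-(n-1)t) ≤ x̂) ≤ -x̂²/4`. -/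
theorem mdp_upper_bound_lower_tail (n : ℕ) (hn : 2 ≤ n) (β : ℝ) (hβ0 : 0 < β)
    (hβ : β < 1 / 2) (d : ℝ) (hd : 1 < d)
    (p : ℝ → ℝ → ℝ) (hp : Measurable (Function.uncurry p))
    (hp_nonneg : ∀ η t : ℝ, 0 < η → 0 < t → 0 ≤ p η t)
    (hp_le : ∀ η t : ℝ, 0 < η → 0 < t → p η t ≤ d * hypg n η t)
    (xhat : ℝ) (hx : xhat < 0) :
    Filter.limsup
        (fun t : ℝ => ((t ^ (2 * β - 1) : ℝ) : EReal) *
          ENNReal.log (∫⁻ η in {η : ℝ | 0 < η ∧ η ≤ xhat * t ^ (1 - β) + ((n : ℝ) - 1) * t},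
            ENNReal.ofReal (p η t)))
        Filter.atTop ≤
      ((-(xhat ^ 2 / 4) : ℝ) : EReal) := by
  have hev := mdp_eventual_bound n hn β hβ0 hβ d hd p hp_le xhat hx
  have hflim := mdpL_tendsto n hn β hβ0 hβ d xhat
  refine le_trans (limsup_le_limsup hev) ?_
  rw [(EReal.tendsto_coe.2 hflim).limsup_eq]
end

section
/- Let n ≥ 2 be an integer, β ∈ (0,1/2), and d > 1, and let p : (0,∞) × (0,∞) → [0,∞) be measurable with p(η,t) ≤ d g_n(η,t) for all η, t > 0 and ∫_0^∞ p(η,t) dη ≤ 1 for all t > 0. Then for every closed set F ⊆ ℝ, limsup_{t→∞} t^{2β−1} · log ( ∫_{{η > 0 : t^{β−1}(η−(n−1)t) ∈ F}} p(η,t) dη ) ≤ −inf_{x ∈ F} x²/4. -/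
open MeasureTheory Real Filter

private lemma aux_one_add_mul_exp {lam : ℝ} (s : ℝ) (h0 : 0 < lam) (h1 : lam ≤ 1) :
    (1 + s) * Real.exp (-(lam * s)) ≤ 1 / lam := by
  have h2 : 1 + s ≤ Real.exp (lam * s) / lam :=
    (le_div_iff₀ h0).2 (by nlinarith [Real.add_one_le_exp (lam * s)])
  calc (1 + s) * Real.exp (-(lam * s))
      ≤ (Real.exp (lam * s) / lam) * Real.exp (-(lam * s)) :=
        mul_le_mul_of_nonneg_right h2 (Real.exp_pos _).le
    _ = 1 / lam := by rw [div_mul_eq_mul_div, ← Real.exp_add]; simp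

set_option maxHeartbeats 1000000 in
private lemma hypg_bound (n : ℕ) (hn : 2 ≤ n) {t : ℝ} (ht : 1 ≤ t) {R : ℝ} (hR : 0 ≤ R)
    {η : ℝ} (hη : 0 < η) (hu : R ≤ |η - ((n : ℝ) - 1) * t|) :
    hypg n η t ≤ ((1 + (n : ℝ) * t) * (1 + R) * (16 * ((n : ℝ) + 1) * t)) ^ (n + 1) *
      Real.exp (-R ^ 2 / (4 * t)) *
      (Real.exp (-(1 / (8 * t)) * (η - (((n : ℝ) - 1) * t + R)) ^ 2) +
       Real.exp (-(1 / (8 * t)) * (η - (((n : ℝ) - 1) * t - R)) ^ 2)) := by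
  have ht0 : (0 : ℝ) < t := lt_of_lt_of_le one_pos ht
  have hn0 : (0 : ℝ) ≤ (n : ℝ) := Nat.cast_nonneg n
  set u : ℝ := η - ((n : ℝ) - 1) * t with hu_def
  set w : ℝ := |u| - R with hw_def
  have hw : 0 ≤ w := sub_nonneg.2 hu
  have habs : |u| = R + w := by rw [hw_def]; ring
  have hb1 : (1 : ℝ) ≤ 1 + η + t := by linarith
  have hb0 : (0 : ℝ) < 1 + η + t := by linarith
  have hnt : (0 : ℝ) ≤ (n : ℝ) * t := by positivity
  have hA : (0:ℝ) ≤ 1 + (n : ℝ) * t := by linarith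
  have hB : (0:ℝ) ≤ 1 + R := by linarith
  have hC : (0:ℝ) ≤ 16 * ((n : ℝ) + 1) * t := by positivity
  -- Step A
  have h3 : (1+η+t) ^ (((n:ℝ)-3)/2) * (1+η) ≤ (1+η+t)^(n+1) := by
    have e1 : (1+η) ≤ (1+η+t) ^ (1:ℝ) := by rw [Real.rpow_one]; linarith
    calc (1+η+t)^(((n:ℝ)-3)/2) * (1+η)
        ≤ (1+η+t)^(((n:ℝ)-3)/2) * (1+η+t)^(1:ℝ) :=
          mul_le_mul_of_nonneg_left e1 (Real.rpow_nonneg hb0.le _)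
      _ = (1+η+t) ^ ((((n:ℝ)-3)/2) + 1) := (Real.rpow_add hb0 _ _).symm
      _ ≤ (1+η+t) ^ (((n+1 : ℕ)) : ℝ) :=
          Real.rpow_le_rpow_of_exponent_le hb1 (by push_cast; linarith)
      _ = (1+η+t) ^ (n+1) := Real.rpow_natCast _ _
  have stepA : hypg n η t ≤ Real.exp (-u ^ 2 / (4 * t)) * (1 + η + t) ^ (n + 1) := by
    have h1 : t ^ (-(n : ℝ) / 2) ≤ 1 :=
      Real.rpow_le_one_of_one_le_of_nonpos ht (by linarith)
    have h2 : (η/(1+η))^(n-1) ≤ 1 :=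
      pow_le_one₀ (by positivity) (div_le_one_of_le₀ (by linarith) (by linarith))
    calc hypg n η t
        = (t ^ (-(n:ℝ)/2) * (η/(1+η))^(n-1)) *
            (Real.exp (-u^2/(4*t)) * ((1+η+t)^(((n:ℝ)-3)/2) * (1+η))) := by
          rw [hypg]; ring
      _ ≤ (1 * 1) * (Real.exp (-u^2/(4*t)) * (1+η+t)^(n+1)) := by
          apply mul_le_mul
          · exact mul_le_mul h1 h2 (by positivity) zero_le_one
          · exact mul_le_mul_of_nonneg_left h3 (Real.exp_pos _).le
          · have : (0:ℝ) ≤ (1+η+t)^(((n:ℝ)-3)/2) * (1+η) := by positivity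
            positivity
          · norm_num
      _ = Real.exp (-u^2/(4*t)) * (1+η+t)^(n+1) := by ring
  -- Step B
  have hbase : 1+η+t ≤ (1+(n:ℝ)*t)*(1+R)*(1+w) := by
    have h5 : η ≤ |u| + ((n:ℝ)-1)*t := by
      have := le_abs_self u; rw [hu_def] at this ⊢ <;> linarith [le_abs_self u]
    rw [habs] at h5
    nlinarith [mul_nonneg hR hw, mul_nonneg hnt hR, mul_nonneg hnt hw,
      mul_nonneg (mul_nonneg hnt hR) hw]
  have stepB : (1+η+t)^(n+1) ≤ ((1+(n:ℝ)*t)*(1+R)*(1+w))^(n+1) :=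
    pow_le_pow_left₀ hb0.le hbase _
  -- Step C
  have stepC : Real.exp (-u^2/(4*t)) ≤
      Real.exp (-R^2/(4*t)) * Real.exp (-(w^2)/(8*t)) * Real.exp (-(w^2)/(8*t)) := by
    rw [← Real.exp_add, ← Real.exp_add]
    apply Real.exp_le_exp.2
    have hu2 : R^2 + w^2 ≤ u^2 := by nlinarith [sq_abs u, mul_nonneg hR hw]
    have h6 : 0 ≤ (u^2 - (R^2 + w^2))/(4*t) := div_nonneg (by linarith) (by positivity)
    have h7 : (-R^2/(4*t) + -(w^2)/(8*t) + -(w^2)/(8*t)) - (-u^2/(4*t))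
        = (u^2 - (R^2+w^2))/(4*t) := by ring
    linarith
  -- Step D
  have stepD : (1+w)^(n+1) * Real.exp (-(w^2)/(8*t)) ≤ (16*((n:ℝ)+1)*t)^(n+1) := by
    have hden : (0:ℝ) < 8*((n:ℝ)+1)*t := by positivity
    have hlam0 : 0 < 1/(8*((n:ℝ)+1)*t) := by positivity
    have hlam1 : 1/(8*((n:ℝ)+1)*t) ≤ 1 := by
      rw [div_le_one hden]; nlinarith
    have key := aux_one_add_mul_exp (w^2) hlam0 hlam1
    rw [one_div_one_div] at key
    have harg : 1/(8*((n:ℝ)+1)*t) * w^2 = w^2/(8*((n:ℝ)+1)*t) := by ring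
    rw [harg] at key
    have key2 : (2*(1+w^2)) * Real.exp (-(w^2/(8*((n:ℝ)+1)*t))) ≤ 16*((n:ℝ)+1)*t := by
      calc (2*(1+w^2)) * Real.exp (-(w^2/(8*((n:ℝ)+1)*t)))
          = 2*((1+w^2) * Real.exp (-(w^2/(8*((n:ℝ)+1)*t)))) := by ring
        _ ≤ 2*(8*((n:ℝ)+1)*t) := by linarith
        _ = 16*((n:ℝ)+1)*t := by ring
    have hexp_eq : Real.exp (-(w^2)/(8*t))
        = (Real.exp (-(w^2/(8*((n:ℝ)+1)*t))))^(n+1) := by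
      rw [← Real.exp_nat_mul]; congr 1; push_cast; field_simp
    calc (1+w)^(n+1) * Real.exp (-(w^2)/(8*t))
        ≤ (2*(1+w^2))^(n+1) * Real.exp (-(w^2)/(8*t)) := by
          apply mul_le_mul_of_nonneg_right _ (Real.exp_pos _).le
          exact pow_le_pow_left₀ (by linarith) (by nlinarith [sq_nonneg w, sq_nonneg (w-1)]) _
      _ = ((2*(1+w^2)) * Real.exp (-(w^2/(8*((n:ℝ)+1)*t))))^(n+1) := by
          rw [hexp_eq, ← mul_pow]
      _ ≤ (16*((n:ℝ)+1)*t)^(n+1) := pow_le_pow_left₀ (by positivity) key2 _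
  -- Step E
  have stepE : Real.exp (-(w^2)/(8*t)) ≤
      Real.exp (-(1 / (8 * t)) * (η - (((n : ℝ) - 1) * t + R)) ^ 2) +
      Real.exp (-(1 / (8 * t)) * (η - (((n : ℝ) - 1) * t - R)) ^ 2) := by
    rcases le_abs.1 hu with h | h
    · have habs' : |u| = u := abs_of_nonneg (hR.trans h)
      have he : -(w^2)/(8*t) = -(1 / (8 * t)) * (η - (((n : ℝ) - 1) * t + R)) ^ 2 := by
        rw [hw_def, habs', hu_def]; ring
      rw [he]; exact le_add_of_nonneg_right (Real.exp_pos _).le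
    · have habs' : |u| = -u := abs_of_nonpos (by linarith)
      have he : -(w^2)/(8*t) = -(1 / (8 * t)) * (η - (((n : ℝ) - 1) * t - R)) ^ 2 := by
        rw [hw_def, habs', hu_def]; ring
      rw [he]; exact le_add_of_nonneg_left (Real.exp_pos _).le
  -- assembly
  have hDnn : (0:ℝ) ≤ ((1+(n:ℝ)*t)*(1+R))^(n+1) * Real.exp (-R^2/(4*t)) :=
    mul_nonneg (pow_nonneg (mul_nonneg hA hB) _) (Real.exp_pos _).le
  calc hypg n η t
      ≤ Real.exp (-u^2/(4*t)) * (1+η+t)^(n+1) := stepA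
    _ ≤ Real.exp (-u^2/(4*t)) * ((1+(n:ℝ)*t)*(1+R)*(1+w))^(n+1) :=
        mul_le_mul_of_nonneg_left stepB (Real.exp_pos _).le
    _ = Real.exp (-u^2/(4*t)) * (((1+(n:ℝ)*t)*(1+R))^(n+1) * (1+w)^(n+1)) := by
        rw [← mul_pow]
    _ ≤ (Real.exp (-R^2/(4*t)) * Real.exp (-(w^2)/(8*t)) * Real.exp (-(w^2)/(8*t))) *
          (((1+(n:ℝ)*t)*(1+R))^(n+1) * (1+w)^(n+1)) := by
        apply mul_le_mul_of_nonneg_right stepC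
        exact mul_nonneg (pow_nonneg (mul_nonneg hA hB) _) (pow_nonneg (by linarith) _)
    _ = (((1+(n:ℝ)*t)*(1+R))^(n+1) * Real.exp (-R^2/(4*t))) *
          ((1+w)^(n+1) * Real.exp (-(w^2)/(8*t))) * Real.exp (-(w^2)/(8*t)) := by ring
    _ ≤ (((1+(n:ℝ)*t)*(1+R))^(n+1) * Real.exp (-R^2/(4*t))) *
          (16*((n:ℝ)+1)*t)^(n+1) *
          (Real.exp (-(1 / (8 * t)) * (η - (((n : ℝ) - 1) * t + R)) ^ 2) +
           Real.exp (-(1 / (8 * t)) * (η - (((n : ℝ) - 1) * t - R)) ^ 2)) := by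
        apply mul_le_mul
        · exact mul_le_mul_of_nonneg_left stepD hDnn
        · exact stepE
        · exact (Real.exp_pos _).le
        · exact mul_nonneg hDnn (pow_nonneg hC _)
    _ = ((1 + (n : ℝ) * t) * (1 + R) * (16 * ((n : ℝ) + 1) * t)) ^ (n + 1) *
          Real.exp (-R ^ 2 / (4 * t)) *
          (Real.exp (-(1 / (8 * t)) * (η - (((n : ℝ) - 1) * t + R)) ^ 2) +
           Real.exp (-(1 / (8 * t)) * (η - (((n : ℝ) - 1) * t - R)) ^ 2)) := by
        rw [mul_pow ((1+(n:ℝ)*t)*(1+R))]; ring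

set_option maxHeartbeats 1000000 in
private lemma lintegral_bound (n : ℕ) (hn : 2 ≤ n) {t : ℝ} (ht : 1 ≤ t) {R : ℝ} (hR : 0 ≤ R)
    {d : ℝ} (hd : 0 ≤ d) (p : ℝ → ℝ → ℝ)
    (hp_le : ∀ η : ℝ, 0 < η → p η t ≤ d * hypg n η t) :
    ∫⁻ η in {η : ℝ | 0 < η ∧ R ≤ |η - ((n : ℝ) - 1) * t|}, ENNReal.ofReal (p η t) ≤
      ENNReal.ofReal ((d * (((1 + (n : ℝ) * t) * (1 + R) * (16 * ((n : ℝ) + 1) * t)) ^ (n + 1) *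
        Real.exp (-R ^ 2 / (4 * t)))) * (2 * Real.sqrt (π / (1 / (8 * t))))) := by
  have ht0 : (0 : ℝ) < t := lt_of_lt_of_le one_pos ht
  have hb : (0 : ℝ) < 1 / (8 * t) := by positivity
  set C : ℝ := ((1 + (n : ℝ) * t) * (1 + R) * (16 * ((n : ℝ) + 1) * t)) ^ (n + 1) *
    Real.exp (-R ^ 2 / (4 * t)) with hC_def
  set s₁ : ℝ := ((n : ℝ) - 1) * t + R
  set s₂ : ℝ := ((n : ℝ) - 1) * t - R
  set h : ℝ → ℝ := fun η => (d * C) *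
    (Real.exp (-(1 / (8 * t)) * (η - s₁) ^ 2) + Real.exp (-(1 / (8 * t)) * (η - s₂) ^ 2))
    with hh_def
  have hint1 : Integrable (fun η : ℝ => Real.exp (-(1 / (8 * t)) * (η - s₁) ^ 2)) :=
    (integrable_exp_neg_mul_sq hb).comp_sub_right s₁
  have hint2 : Integrable (fun η : ℝ => Real.exp (-(1 / (8 * t)) * (η - s₂) ^ 2)) :=
    (integrable_exp_neg_mul_sq hb).comp_sub_right s₂
  have hint : Integrable h := ((hint1.add hint2).const_mul (d * C))
  have hCnn : 0 ≤ C := by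
    apply mul_nonneg _ (Real.exp_pos _).le
    apply pow_nonneg
    have h1 : (0:ℝ) ≤ 1 + (n:ℝ)*t := by positivity
    have h2 : (0:ℝ) ≤ 16*((n:ℝ)+1)*t := by positivity
    exact mul_nonneg (mul_nonneg h1 (by linarith)) h2
  calc ∫⁻ η in {η : ℝ | 0 < η ∧ R ≤ |η - ((n : ℝ) - 1) * t|}, ENNReal.ofReal (p η t)
      ≤ ∫⁻ η in {η : ℝ | 0 < η ∧ R ≤ |η - ((n : ℝ) - 1) * t|}, ENNReal.ofReal (h η) := by
        apply setLIntegral_mono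
        · apply Measurable.ennreal_ofReal
          fun_prop
        · intro η hη
          apply ENNReal.ofReal_le_ofReal
          calc p η t ≤ d * hypg n η t := hp_le η hη.1
            _ ≤ h η := by
                rw [hh_def]
                simp only []
                rw [mul_assoc]
                exact mul_le_mul_of_nonneg_left (hypg_bound n hn ht hR hη.1 hη.2) hd
    _ ≤ ∫⁻ η, ENNReal.ofReal (h η) := setLIntegral_le_lintegral _ _
    _ = ENNReal.ofReal (∫ η, h η) := by
        rw [ofReal_integral_eq_lintegral_ofReal hint]
        exact Filter.Eventually.of_forall fun η => by positivity
    _ ≤ ENNReal.ofReal ((d * C) * (2 * Real.sqrt (π / (1 / (8 * t))))) := by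
        apply ENNReal.ofReal_le_ofReal
        rw [hh_def]
        rw [integral_const_mul, integral_add hint1 hint2]
        have g1 : ∫ η : ℝ, Real.exp (-(1 / (8 * t)) * (η - s₁) ^ 2)
            = Real.sqrt (π / (1 / (8 * t))) := by
          rw [integral_sub_right_eq_self (fun x : ℝ => Real.exp (-(1 / (8 * t)) * x ^ 2)) s₁]
          exact integral_gaussian _
        have g2 : ∫ η : ℝ, Real.exp (-(1 / (8 * t)) * (η - s₂) ^ 2)
            = Real.sqrt (π / (1 / (8 * t))) := by
          rw [integral_sub_right_eq_self (fun x : ℝ => Real.exp (-(1 / (8 * t)) * x ^ 2)) s₂]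
          exact integral_gaussian _
        rw [g1, g2]; ring_nf; exact le_refl _

private lemma ereal_mul_le_coe {a : ℝ} (ha : 0 < a) {x : EReal} {y : ℝ} (h : x ≤ (y : EReal)) :
    (a : EReal) * x ≤ ((a * y : ℝ) : EReal) := by
  induction x using EReal.rec with
  | bot => rw [EReal.coe_mul_bot_of_pos ha]; exact bot_le
  | coe z =>
      rw [← EReal.coe_mul]
      exact_mod_cast mul_le_mul_of_nonneg_left (by exact_mod_cast h) ha.le
  | top => exact absurd h (not_le.2 (EReal.coe_lt_top y))

set_option maxHeartbeats 1000000 in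
/-- Moderate deviation upper bound for closed sets for the radial component of hyperbolic
Brownian motion: for every closed `F`,
`limsup_{t→∞} t^{2β-1} log P(t^{β-1}(D_n(t)-(n-1)t) ∈ F) ≤ -inf_{x ∈ F} x²/4`. -/
theorem mdp_upper_bound (n : ℕ) (hn : 2 ≤ n) (β : ℝ) (hβ0 : 0 < β) (hβ : β < 1 / 2)
    (d : ℝ) (hd : 1 < d)
    (p : ℝ → ℝ → ℝ) (hp : Measurable (Function.uncurry p))
    (hp_nonneg : ∀ η t : ℝ, 0 < η → 0 < t → 0 ≤ p η t)
    (hp_le : ∀ η t : ℝ, 0 < η → 0 < t → p η t ≤ d * hypg n η t)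
    (hp_prob : ∀ t : ℝ, 0 < t → ∫⁻ η in Set.Ioi (0 : ℝ), ENNReal.ofReal (p η t) ≤ 1)
    (F : Set ℝ) (hF : IsClosed F) :
    Filter.limsup
        (fun t : ℝ => ((t ^ (2 * β - 1) : ℝ) : EReal) *
          ENNReal.log (∫⁻ η in {η : ℝ | 0 < η ∧ t ^ (β - 1) * (η - ((n : ℝ) - 1) * t) ∈ F},
            ENNReal.ofReal (p η t)))
        Filter.atTop ≤
      -(⨅ x ∈ F, ((x ^ 2 / 4 : ℝ) : EReal)) := by
  rcases F.eq_empty_or_nonempty with rfl | hne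
  · -- empty set
    have hL : ∀ᶠ t : ℝ in atTop,
        ((t ^ (2 * β - 1) : ℝ) : EReal) *
          ENNReal.log (∫⁻ η in {η : ℝ | 0 < η ∧ t ^ (β - 1) * (η - ((n : ℝ) - 1) * t) ∈ (∅ : Set ℝ)},
            ENNReal.ofReal (p η t)) = (⊥ : EReal) := by
      filter_upwards [eventually_gt_atTop 0] with t ht0
      have hset : {η : ℝ | 0 < η ∧ t ^ (β - 1) * (η - ((n : ℝ) - 1) * t) ∈ (∅ : Set ℝ)}
          = (∅ : Set ℝ) := by simp
      rw [hset]
      simp only [Measure.restrict_empty, lintegral_zero_measure, ENNReal.log_zero]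
      exact EReal.coe_mul_bot_of_pos (Real.rpow_pos_of_pos ht0 _)
    calc Filter.limsup _ Filter.atTop
        = Filter.limsup (fun _ : ℝ => (⊥ : EReal)) atTop := limsup_congr hL
      _ = (⊥ : EReal) := limsup_const _
      _ ≤ _ := bot_le
  · haveI : Nonempty F := hne.to_subtype
    set c : ℝ := ⨅ x : F, ((x : ℝ) ^ 2 / 4) with hc_def
    have hbdd : BddBelow (Set.range fun x : F => ((x : ℝ) ^ 2 / 4)) :=
      ⟨0, by rintro y ⟨x, rfl⟩; positivity⟩
    have hc0 : 0 ≤ c := le_ciInf fun x => by positivity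
    have hcle : ∀ x ∈ F, c ≤ x ^ 2 / 4 := fun x hx => ciInf_le hbdd ⟨x, hx⟩
    set r : ℝ := 2 * Real.sqrt c with hr_def
    have hr0 : 0 ≤ r := by positivity
    have hrc : r ^ 2 / 4 = c := by
      rw [hr_def, mul_pow, Real.sq_sqrt hc0]; ring
    have hrabs : ∀ x ∈ F, r ≤ |x| := by
      intro x hx
      have h1 : 4 * c ≤ x ^ 2 := by linarith [hcle x hx]
      calc r = Real.sqrt (4 * c) := by
            rw [hr_def, show (4 : ℝ) * c = 2 ^ 2 * c by ring,
              Real.sqrt_mul (by positivity), Real.sqrt_sq (by norm_num)]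
        _ ≤ Real.sqrt (x ^ 2) := Real.sqrt_le_sqrt h1
        _ = |x| := Real.sqrt_sq_eq_abs x
    have hInf : (⨅ x ∈ F, ((x ^ 2 / 4 : ℝ) : EReal)) = ((c : ℝ) : EReal) := by
      apply le_antisymm
      · apply EReal.le_of_forall_lt_iff_le.1
        intro z hz
        have hcz : c < z := by exact_mod_cast hz
        obtain ⟨⟨x, hxF⟩, hxz⟩ := exists_lt_of_ciInf_lt hcz
        calc (⨅ x ∈ F, ((x ^ 2 / 4 : ℝ) : EReal)) ≤ ((x ^ 2 / 4 : ℝ) : EReal) :=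
              iInf₂_le x hxF
          _ ≤ (z : EReal) := by exact_mod_cast hxz.le
      · exact le_iInf₂ fun x hx => EReal.coe_le_coe_iff.2 (hcle x hx)
    rw [hInf, ← EReal.coe_neg]
    -- constants
    set K : ℝ := (1 + (n : ℝ)) * (1 + r) * (16 * ((n : ℝ) + 1)) with hK_def
    have hK0 : 0 < K := by
      apply mul_pos (mul_pos _ _) _ <;> positivity
    set A : ℝ := d * (K ^ (n + 1) * (2 * Real.sqrt (8 * π))) with hA_def
    have hd0 : (0 : ℝ) < d := lt_trans one_pos hd
    have hA0 : 0 < A := by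
      apply mul_pos hd0
      apply mul_pos (pow_pos hK0 _)
      positivity
    set m : ℕ := 3 * (n + 1) + 1 with hm_def
    set g : ℝ → ℝ := fun t =>
      Real.log A * t ^ (2 * β - 1) + (m : ℝ) * (t ^ (2 * β - 1) * Real.log t) - c with hg_def
    -- eventual bound
    have hev : ∀ᶠ t : ℝ in atTop,
        ((t ^ (2 * β - 1) : ℝ) : EReal) *
          ENNReal.log (∫⁻ η in {η : ℝ | 0 < η ∧ t ^ (β - 1) * (η - ((n : ℝ) - 1) * t) ∈ F},
            ENNReal.ofReal (p η t)) ≤ ((g t : ℝ) : EReal) := by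
      filter_upwards [eventually_ge_atTop 1] with t ht
      have ht0 : (0 : ℝ) < t := lt_of_lt_of_le one_pos ht
      set R : ℝ := r * t ^ (1 - β) with hR_def
      have hR0 : 0 ≤ R := by positivity
      -- subset
      have hsub : {η : ℝ | 0 < η ∧ t ^ (β - 1) * (η - ((n : ℝ) - 1) * t) ∈ F} ⊆
          {η : ℝ | 0 < η ∧ R ≤ |η - ((n : ℝ) - 1) * t|} := by
        rintro η ⟨hη, hmem⟩
        refine ⟨hη, ?_⟩
        have h1 : r ≤ |t ^ (β - 1) * (η - ((n : ℝ) - 1) * t)| := hrabs _ hmem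
        rw [abs_mul, abs_of_pos (Real.rpow_pos_of_pos ht0 _)] at h1
        have h2 : t ^ (1 - β) * r ≤ t ^ (1 - β) * (t ^ (β - 1) * |η - ((n : ℝ) - 1) * t|) :=
          mul_le_mul_of_nonneg_left h1 (Real.rpow_nonneg ht0.le _)
        have h3 : t ^ (1 - β) * t ^ (β - 1) = 1 := by
          rw [← Real.rpow_add ht0]; norm_num
        calc R = t ^ (1 - β) * r := mul_comm _ _
          _ ≤ t ^ (1 - β) * (t ^ (β - 1) * |η - ((n : ℝ) - 1) * t|) := h2
          _ = (t ^ (1 - β) * t ^ (β - 1)) * |η - ((n : ℝ) - 1) * t| := (mul_assoc _ _ _).symm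
          _ = |η - ((n : ℝ) - 1) * t| := by rw [h3, one_mul]
      -- exponent computations
      have hone : t ^ (2 * β - 1) * t ^ (1 - 2 * β) = 1 := by
        rw [← Real.rpow_add ht0]; norm_num
      have hR2 : R ^ 2 / (4 * t) = c * t ^ (1 - 2 * β) := by
        have e1 : (t ^ (1 - β)) ^ 2 = t ^ (1 - β) * t ^ (1 - β) := sq _
        have e2 : t ^ (1 - β) * t ^ (1 - β) = t ^ (2 - 2 * β) := by
          rw [← Real.rpow_add ht0]; ring_nf
        have e3 : t ^ (2 - 2 * β) = t ^ (1 - 2 * β) * t := by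
          rw [show (2 - 2 * β) = (1 - 2 * β) + 1 by ring, Real.rpow_add ht0, Real.rpow_one]
        rw [hR_def, mul_pow, e1, e2, e3, ← hrc]
        field_simp
      -- lintegral bound
      have hIle : (∫⁻ η in {η : ℝ | 0 < η ∧ t ^ (β - 1) * (η - ((n : ℝ) - 1) * t) ∈ F},
            ENNReal.ofReal (p η t)) ≤
          ENNReal.ofReal (A * t ^ m * Real.exp (-c * t ^ (1 - 2 * β))) := by
        calc (∫⁻ η in {η : ℝ | 0 < η ∧ t ^ (β - 1) * (η - ((n : ℝ) - 1) * t) ∈ F},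
              ENNReal.ofReal (p η t))
            ≤ ∫⁻ η in {η : ℝ | 0 < η ∧ R ≤ |η - ((n : ℝ) - 1) * t|},
              ENNReal.ofReal (p η t) := lintegral_mono_set hsub
          _ ≤ ENNReal.ofReal ((d * (((1 + (n : ℝ) * t) * (1 + R) * (16 * ((n : ℝ) + 1) * t)) ^ (n + 1) *
              Real.exp (-R ^ 2 / (4 * t)))) * (2 * Real.sqrt (π / (1 / (8 * t))))) :=
              lintegral_bound n hn ht hR0 hd0.le p (fun η hη => hp_le η t hη ht0)
          _ ≤ ENNReal.ofReal (A * t ^ m * Real.exp (-c * t ^ (1 - 2 * β))) := by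
              apply ENNReal.ofReal_le_ofReal
              have hb1 : 1 + (n : ℝ) * t ≤ (1 + (n : ℝ)) * t := by nlinarith [Nat.cast_nonneg (α := ℝ) n]
              have hb2 : 1 + R ≤ (1 + r) * t := by
                have : t ^ (1 - β) ≤ t := by
                  nth_rewrite 2 [← Real.rpow_one t]
                  exact Real.rpow_le_rpow_of_exponent_le ht (by linarith)
                have hrt : R ≤ r * t := by
                  rw [hR_def]; exact mul_le_mul_of_nonneg_left this hr0
                nlinarith [mul_nonneg hr0 ht0.le]
              have hb3 : (1 + (n : ℝ) * t) * (1 + R) * (16 * ((n : ℝ) + 1) * t) ≤ K * t ^ 3 := by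
                rw [hK_def]
                calc (1 + (n : ℝ) * t) * (1 + R) * (16 * ((n : ℝ) + 1) * t)
                    ≤ ((1 + (n : ℝ)) * t) * ((1 + r) * t) * (16 * ((n : ℝ) + 1) * t) := by
                      apply mul_le_mul_of_nonneg_right _ (by positivity)
                      apply mul_le_mul hb1 hb2 (by linarith) (by positivity)
                  _ = (1 + (n : ℝ)) * (1 + r) * (16 * ((n : ℝ) + 1)) * t ^ 3 := by ring
              have hsq : Real.sqrt (π / (1 / (8 * t))) ≤ Real.sqrt (8 * π) * t := by
                have e4 : π / (1 / (8 * t)) = 8 * π * t := by field_simp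
                rw [e4]
                have htt : t ≤ t ^ 2 := by nlinarith
                calc Real.sqrt (8 * π * t) ≤ Real.sqrt (8 * π * t ^ 2) := by
                      apply Real.sqrt_le_sqrt; nlinarith [pi_pos, htt]
                  _ = Real.sqrt (8 * π) * t := by
                      rw [Real.sqrt_mul (by positivity), Real.sqrt_sq ht0.le]
              have hexp_eq : Real.exp (-R ^ 2 / (4 * t)) = Real.exp (-c * t ^ (1 - 2 * β)) := by
                congr 1
                rw [neg_div, hR2]; ring
              have hbase_nn : (0:ℝ) ≤ (1 + (n : ℝ) * t) * (1 + R) * (16 * ((n : ℝ) + 1) * t) := by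
                have : (0:ℝ) ≤ 1 + R := by linarith
                positivity
              calc (d * (((1 + (n : ℝ) * t) * (1 + R) * (16 * ((n : ℝ) + 1) * t)) ^ (n + 1) *
                    Real.exp (-R ^ 2 / (4 * t)))) * (2 * Real.sqrt (π / (1 / (8 * t))))
                  ≤ (d * ((K * t ^ 3) ^ (n + 1) *
                    Real.exp (-R ^ 2 / (4 * t)))) * (2 * (Real.sqrt (8 * π) * t)) := by
                    apply mul_le_mul
                    · apply mul_le_mul_of_nonneg_left _ hd0.le
                      apply mul_le_mul_of_nonneg_right _ (Real.exp_pos _).le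
                      exact pow_le_pow_left₀ hbase_nn hb3 _
                    · linarith
                    · positivity
                    · have : (0:ℝ) ≤ (K * t ^ 3) ^ (n + 1) := by positivity
                      positivity
                _ = A * t ^ m * Real.exp (-c * t ^ (1 - 2 * β)) := by
                    rw [hexp_eq, hA_def, hm_def, mul_pow K, ← pow_mul]
                    rw [show 3 * (n + 1) + 1 = 3 * (n + 1) + 1 from rfl, pow_succ]
                    ring
      -- from integral bound to the log bound
      have hB'pos : 0 < A * t ^ m * Real.exp (-c * t ^ (1 - 2 * β)) :=
        mul_pos (mul_pos hA0 (pow_pos ht0 _)) (Real.exp_pos _)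
      have hlog : ENNReal.log (∫⁻ η in {η : ℝ | 0 < η ∧ t ^ (β - 1) * (η - ((n : ℝ) - 1) * t) ∈ F},
            ENNReal.ofReal (p η t)) ≤
          ((Real.log (A * t ^ m * Real.exp (-c * t ^ (1 - 2 * β))) : ℝ) : EReal) := by
        rw [← ENNReal.log_ofReal_of_pos hB'pos]
        exact ENNReal.log_monotone hIle
      have hmul := ereal_mul_le_coe (Real.rpow_pos_of_pos ht0 (2 * β - 1)) hlog
      refine le_trans hmul ?_
      apply EReal.coe_le_coe_iff.2
      have hlogB : Real.log (A * t ^ m * Real.exp (-c * t ^ (1 - 2 * β)))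
          = Real.log A + (m : ℝ) * Real.log t + (-c * t ^ (1 - 2 * β)) := by
        rw [Real.log_mul (by positivity) (Real.exp_ne_zero _),
          Real.log_mul (ne_of_gt hA0) (pow_ne_zero _ (ne_of_gt ht0)),
          Real.log_exp, Real.log_pow]
      rw [hlogB, hg_def]
      have : t ^ (2 * β - 1) * (Real.log A + (m : ℝ) * Real.log t + (-c * t ^ (1 - 2 * β)))
          = Real.log A * t ^ (2 * β - 1) + (m : ℝ) * (t ^ (2 * β - 1) * Real.log t)
            + (-c) * (t ^ (2 * β - 1) * t ^ (1 - 2 * β)) := by ring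
      rw [this, hone]
      apply le_of_eq; ring
    -- limits
    have hδ : (0 : ℝ) < 1 - 2 * β := by linarith
    have T1 : Tendsto (fun t : ℝ => t ^ (2 * β - 1)) atTop (nhds 0) := by
      have h := tendsto_rpow_neg_atTop hδ
      have he : (fun t : ℝ => t ^ (2 * β - 1)) = fun t : ℝ => t ^ (-(1 - 2 * β)) := by
        funext t; congr 1; ring
      rw [he]; exact h
    have T2 : Tendsto (fun t : ℝ => t ^ (2 * β - 1) * Real.log t) atTop (nhds 0) := by
      have h := (isLittleO_log_rpow_atTop hδ).tendsto_div_nhds_zero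
      apply h.congr'
      filter_upwards [eventually_gt_atTop 0] with t ht0'
      rw [show (2 * β - 1) = -(1 - 2 * β) by ring, Real.rpow_neg ht0'.le,
        div_eq_mul_inv, mul_comm]
    have hg' : Tendsto g atTop (nhds (-c)) := by
      have := ((T1.const_mul (Real.log A)).add (T2.const_mul (m : ℝ))).sub_const c
      simpa using this
    calc Filter.limsup _ Filter.atTop
        ≤ Filter.limsup (fun t : ℝ => ((g t : ℝ) : EReal)) atTop := limsup_le_limsup hev
      _ = ((-c : ℝ) : EReal) := Tendsto.limsup_eq (EReal.tendsto_coe.2 hg')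
end
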